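/- arXiv:1908.08948 — 7 statements merged into one kernel-verified Lean document; each statement's English description precedes it below -/
import Mathlib

section
/- If f₁, f₂ ∈ k⟨x⟩ are nonconstant and stably associated, then deg f₁ = deg f₂ and there exist nonzero g₁, g₂ ∈ k⟨x⟩ with deg g₁ < deg f₁ and deg g₂ < deg f₂ such that f₁g₁ = g₂f₂. -/
/-- An element of the free algebra is *constant* if it lies in the image of the
structure map `k → k⟨x⟩`; otherwise it is *nonconstant*. -/
def Nonconstant (k : Type*) [CommSemiring k] (d : ℕ) (f : FreeAlgebra k (Fin d)) : Prop :=
  f ∉ Set.range (algebraMap k (FreeAlgebra k (Fin d)))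

/-- The degree of `f ∈ k⟨x⟩`: the maximal length of a word in the support of `f`
under the canonical isomorphism with the monoid algebra of the free monoid. -/
noncomputable def ncDeg (k : Type*) [CommSemiring k] (d : ℕ) (f : FreeAlgebra k (Fin d)) : ℕ :=
  (FreeAlgebra.equivMonoidAlgebraFreeMonoid f).coeff.support.sup fun w => w.length

/-- `f₁` and `f₂` are stably associated if `diag (f₂, 1) = P₁ ⬝ diag (f₁, 1) ⬝ P₂` for
some invertible `2 × 2` matrices `P₁, P₂` over `k⟨x⟩`. -/
def StablyAssociated (k : Type*) [CommSemiring k] (d : ℕ)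
    (f₁ f₂ : FreeAlgebra k (Fin d)) : Prop :=
  ∃ P₁ P₂ : Matrix (Fin 2) (Fin 2) (FreeAlgebra k (Fin d)),
    IsUnit P₁ ∧ IsUnit P₂ ∧
      Matrix.diagonal ![f₂, 1] = P₁ * Matrix.diagonal ![f₁, 1] * P₂

/-!
Stable association of `f₁` and `f₂` yields a comaximal relation `f₁ α = u f₂` (`f₁, u` right
comaximal, `α, f₂` left comaximal), and replacing `α, u` by `α - r f₂, u - f₁ r` keeps it one.
In the free algebra the words of top length in a product come from the top words of the factors,
so whenever `a b = c d` and `deg d ≤ deg b`, the top homogeneous component of `b` is a left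
multiple of that of `d`. This drives a Euclidean descent on `deg α + deg f₂`, lowering `α` modulo
`f₂` or `f₂` modulo `α`; it keeps `deg f₁ - deg f₂ = deg u - deg α` and stops when `α` is a unit,
where this difference is `0`. Reducing `α` modulo `f₂` to minimal degree gives the witnesses
`g₁ = α - r f₂` and `g₂ = u - f₁ r`.
-/

section Comaximal

variable {R : Type*} [Ring R]

structure IsComaximalRelation (a b c d : R) : Prop where
  mul_eq : a * b = c * d
  right_comaximal : ∃ x y, a * x + c * y = 1
  left_comaximal : ∃ x y, x * b + y * d = 1

namespace IsComaximalRelation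

variable {a b c d : R}

theorem symm (h : IsComaximalRelation a b c d) : IsComaximalRelation c d a b := by
  obtain ⟨hmul, ⟨x, y, hxy⟩, ⟨x', y', hxy'⟩⟩ := h
  exact ⟨hmul.symm, ⟨y, x, by rwa [add_comm]⟩, ⟨y', x', by rwa [add_comm]⟩⟩

theorem sub_mul (h : IsComaximalRelation a b c d) (r : R) :
    IsComaximalRelation a (b - r * d) (c - a * r) d := by
  obtain ⟨hmul, ⟨x, y, hxy⟩, ⟨x', y', hxy'⟩⟩ := h
  refine ⟨?_, ⟨x + r * y, y, ?_⟩, ⟨x', y' + x' * r, ?_⟩⟩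
  · rw [mul_sub, hmul, _root_.sub_mul, mul_assoc]
  · rw [← hxy]; noncomm_ring
  · rw [← hxy']; noncomm_ring

theorem map {S F : Type*} [Ring S] [FunLike F R S] [RingHomClass F R S] (φ : F)
    (h : IsComaximalRelation a b c d) : IsComaximalRelation (φ a) (φ b) (φ c) (φ d) := by
  obtain ⟨hmul, ⟨x, y, hxy⟩, ⟨x', y', hxy'⟩⟩ := h
  refine ⟨by rw [← map_mul, hmul, map_mul], ⟨φ x, φ y, ?_⟩, ⟨φ x', φ y', ?_⟩⟩
  · rw [← map_mul, ← map_mul, ← map_add, hxy, map_one]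
  · rw [← map_mul, ← map_mul, ← map_add, hxy', map_one]

theorem exists_mul_eq_one_of_eq_mul (h : IsComaximalRelation a b c d) {e : R}
    (hb : b = e * d) : ∃ y, y * d = 1 := by
  obtain ⟨x, y, hxy⟩ := h.left_comaximal
  exact ⟨x * e + y, by rw [← hxy, hb]; noncomm_ring⟩

theorem exists_mul_eq_one_of_isUnit (h : IsComaximalRelation a b c d) (hd : IsUnit d) :
    ∃ x, a * x = 1 := by
  obtain ⟨d, rfl⟩ := hd
  obtain ⟨x, y, hxy⟩ := h.right_comaximal
  have hc : c = a * (b * ↑d⁻¹) := by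
    rw [← mul_assoc, h.mul_eq, mul_assoc, Units.mul_inv, mul_one]
  exact ⟨x + b * ↑d⁻¹ * y, by rw [← hxy, hc]; noncomm_ring⟩

end IsComaximalRelation

open Matrix in
theorem exists_isComaximalRelation_of_diagonal_eq {f₁ f₂ : R}
    {P₁ P₂ : Matrix (Fin 2) (Fin 2) R} (hP₁ : IsUnit P₁) (hP₂ : IsUnit P₂)
    (h : diagonal ![f₂, 1] = P₁ * diagonal ![f₁, 1] * P₂) :
    ∃ b c, IsComaximalRelation f₁ b c f₂ := by
  obtain ⟨Q₁, hQ₁⟩ := hP₁.exists_left_inv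
  obtain ⟨Q₂, hQ₂⟩ := hP₂.exists_left_inv
  have hA : diagonal ![f₁, 1] * P₂ = Q₁ * diagonal ![f₂, 1] := by
    rw [h, ← Matrix.mul_assoc, ← Matrix.mul_assoc, hQ₁, Matrix.one_mul]
  have e₀₀ : f₁ * P₂ 0 0 = Q₁ 0 0 * f₂ := by simpa [mul_apply] using congr_fun₂ hA 0 0
  have e₀₁ : f₁ * P₂ 0 1 = Q₁ 0 1 := by simpa [mul_apply] using congr_fun₂ hA 0 1
  have e₁₀ : P₂ 1 0 = Q₁ 1 0 * f₂ := by simpa [mul_apply] using congr_fun₂ hA 1 0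
  have q₁ : Q₁ 0 0 * P₁ 0 0 + Q₁ 0 1 * P₁ 1 0 = 1 := by
    simpa [mul_apply] using congr_fun₂ hQ₁ 0 0
  have q₂ : Q₂ 0 0 * P₂ 0 0 + Q₂ 0 1 * P₂ 1 0 = 1 := by
    simpa [mul_apply] using congr_fun₂ hQ₂ 0 0
  refine ⟨P₂ 0 0, Q₁ 0 0, e₀₀, ⟨P₂ 0 1 * P₁ 1 0, P₁ 0 0, ?_⟩,
    ⟨Q₂ 0 0, Q₂ 0 1 * Q₁ 1 0, ?_⟩⟩
  · rw [← q₁, ← e₀₁, add_comm, mul_assoc]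
  · rw [← q₂, e₁₀, mul_assoc]

end Comaximal

theorem FreeMonoid.exists_eq_mul_of_length_eq_add {X : Type*} {x : FreeMonoid X} {i j : ℕ}
    (h : x.length = i + j) : ∃ y z : FreeMonoid X, x = y * z ∧ y.length = i ∧ z.length = j := by
  have hx : x.toList.length = i + j := h
  refine ⟨ofList (x.toList.take i), ofList (x.toList.drop i), ?_, ?_, ?_⟩
  · rw [← ofList_append, List.take_append_drop, ofList_toList]
  · simp [length, hx]
  · simp [length, hx]

namespace MonoidAlgebra

variable {k X : Type*}

section Semiring

variable [Semiring k] {f g : MonoidAlgebra k (FreeMonoid X)}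

def wordDegree (f : MonoidAlgebra k (FreeMonoid X)) : ℕ :=
  f.coeff.support.sup FreeMonoid.length

@[simp]
theorem wordDegree_zero : wordDegree (0 : MonoidAlgebra k (FreeMonoid X)) = 0 := rfl

theorem length_le_wordDegree {w : FreeMonoid X} (hw : w ∈ f.coeff.support) :
    w.length ≤ wordDegree f :=
  Finset.le_sup hw

theorem exists_length_eq_wordDegree (hf : f ≠ 0) :
    ∃ w ∈ f.coeff.support, w.length = wordDegree f := by
  obtain ⟨w, hw, h⟩ := Finset.exists_mem_eq_sup f.coeff.support
    (Finsupp.support_nonempty_iff.2 (mt coeff_eq_zero.1 hf)) FreeMonoid.length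
  exact ⟨w, hw, h.symm⟩

theorem coeff_eq_zero_of_wordDegree_lt {w : FreeMonoid X} (h : wordDegree f < w.length) :
    f.coeff w = 0 :=
  Finsupp.notMem_support_iff.1 fun hw => (length_le_wordDegree hw).not_gt h

theorem ne_zero_of_wordDegree_pos (h : 0 < wordDegree f) : f ≠ 0 := by
  rintro rfl
  simp at h

theorem eq_single_one_of_wordDegree_eq_zero (h : wordDegree f = 0) :
    f = single 1 (f.coeff 1) := by
  refine coeff_injective (Finsupp.support_subset_singleton.1 fun w hw => ?_)
  have := length_le_wordDegree hw
  simp_all [FreeMonoid.length_eq_zero]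

theorem wordDegree_single_one (r : k) : wordDegree (single (1 : FreeMonoid X) r) = 0 := by
  refine Nat.eq_zero_of_le_zero (Finset.sup_le fun w hw => ?_)
  rw [coeff_single] at hw
  rw [Finset.mem_singleton.1 (Finsupp.support_single_subset hw)]
  rfl

theorem wordDegree_smul_le (r : k) : wordDegree (r • f) ≤ wordDegree f :=
  Finset.sup_mono Finsupp.support_smul

theorem wordDegree_mul_le : wordDegree (f * g) ≤ wordDegree f + wordDegree g := by
  classical
  refine Finset.sup_le fun w hw => ?_
  obtain ⟨p, hp, q, hq, rfl⟩ := Finset.mem_mul.1 (support_coeff_mul_subset f g hw)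
  rw [FreeMonoid.length_mul]
  exact add_le_add (length_le_wordDegree hp) (length_le_wordDegree hq)

theorem coeff_mul_mul_of_wordDegree_le {a b : FreeMonoid X} (ha : wordDegree f ≤ a.length)
    (hb : wordDegree g ≤ b.length) : (f * g).coeff (a * b) = f.coeff a * g.coeff b := by
  refine coeff_mul_mul_of_uniqueMul fun p q hp hq hpq => ?_
  have hlen := congrArg FreeMonoid.length hpq
  simp only [FreeMonoid.length_mul] at hlen
  have hp' := length_le_wordDegree hp
  have hq' := length_le_wordDegree hq
  obtain ⟨h₁, h₂⟩ := List.append_inj (congrArg FreeMonoid.toList hpq)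
    (show p.length = a.length by omega)
  exact ⟨FreeMonoid.toList.injective h₁, FreeMonoid.toList.injective h₂⟩

theorem wordDegree_mul [NoZeroDivisors k] (hf : f ≠ 0) (hg : g ≠ 0) :
    wordDegree (f * g) = wordDegree f + wordDegree g := by
  obtain ⟨a, ha, hla⟩ := exists_length_eq_wordDegree hf
  obtain ⟨b, hb, hlb⟩ := exists_length_eq_wordDegree hg
  have hab : a * b ∈ (f * g).coeff.support := by
    rw [Finsupp.mem_support_iff, coeff_mul_mul_of_wordDegree_le hla.ge hlb.ge]
    exact mul_ne_zero (Finsupp.mem_support_iff.1 ha) (Finsupp.mem_support_iff.1 hb)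
  refine wordDegree_mul_le.antisymm ?_
  simpa [hla, hlb] using length_le_wordDegree hab

theorem wordDegree_add_eq_of_mul_eq [NoZeroDivisors k] {a b c d : MonoidAlgebra k (FreeMonoid X)}
    (h : a * b = c * d) (hab : a * b ≠ 0) :
    wordDegree a + wordDegree b = wordDegree c + wordDegree d := by
  have hcd : c * d ≠ 0 := h ▸ hab
  rw [← wordDegree_mul (left_ne_zero_of_mul hab) (right_ne_zero_of_mul hab), h,
    wordDegree_mul (left_ne_zero_of_mul hcd) (right_ne_zero_of_mul hcd)]

theorem wordDegree_add_eq_zero_of_mul_eq_one [NoZeroDivisors k] [Nontrivial k] (h : f * g = 1) :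
    wordDegree f + wordDegree g = 0 := by
  rw [← wordDegree_mul (left_ne_zero_of_mul_eq_one h) (right_ne_zero_of_mul_eq_one h), h,
    one_def, wordDegree_single_one]

noncomputable def leftQuot (p : FreeMonoid X) (f : MonoidAlgebra k (FreeMonoid X)) :
    MonoidAlgebra k (FreeMonoid X) :=
  ofCoeff (f.coeff.comapDomain (p * ·) (mul_right_injective p).injOn)

theorem coeff_leftQuot (p w : FreeMonoid X) : (leftQuot p f).coeff w = f.coeff (p * w) := rfl

theorem wordDegree_leftQuot_le (p : FreeMonoid X) :
    wordDegree (leftQuot p f) ≤ wordDegree f - p.length :=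
  Finset.sup_le fun w hw => by
    rw [Finsupp.mem_support_iff, coeff_leftQuot, ← Finsupp.mem_support_iff] at hw
    have := length_le_wordDegree hw
    rw [FreeMonoid.length_mul] at this
    omega

end Semiring

theorem wordDegree_sub_lt_of_coeff_eq [Ring k] {f g : MonoidAlgebra k (FreeMonoid X)}
    (hg : wordDegree g ≤ wordDegree f) (hf : 0 < wordDegree f)
    (htop : ∀ w : FreeMonoid X, w.length = wordDegree f → g.coeff w = f.coeff w) :
    wordDegree (f - g) < wordDegree f := by
  refine (Finset.sup_lt_iff hf).2 fun w hw => lt_of_not_ge fun hle => ?_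
  rw [coeff_sub, Finsupp.mem_support_iff, Finsupp.sub_apply, sub_ne_zero] at hw
  rcases hle.eq_or_lt with heq | hlt
  · exact hw (htop w heq.symm).symm
  · exact hw ((coeff_eq_zero_of_wordDegree_lt hlt).trans
      (coeff_eq_zero_of_wordDegree_lt (hg.trans_lt hlt)).symm)

theorem mem_range_algebraMap_of_wordDegree_eq_zero [CommSemiring k]
    {f : MonoidAlgebra k (FreeMonoid X)} (h : wordDegree f = 0) :
    f ∈ Set.range (algebraMap k (MonoidAlgebra k (FreeMonoid X))) :=
  ⟨f.coeff 1, (eq_single_one_of_wordDegree_eq_zero h).symm⟩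

section Field

variable [Field k] {f : MonoidAlgebra k (FreeMonoid X)}

theorem isUnit_of_wordDegree_eq_zero (hf : f ≠ 0) (h : wordDegree f = 0) : IsUnit f := by
  obtain ⟨r, rfl⟩ := mem_range_algebraMap_of_wordDegree_eq_zero h
  exact (IsUnit.mk0 r (by rintro rfl; simp at hf)).map _

theorem exists_wordDegree_sub_mul_lt_of_mul_eq {a b c d : MonoidAlgebra k (FreeMonoid X)}
    (h : a * b = c * d) (ha : a ≠ 0) (hdb : wordDegree d ≤ wordDegree b)
    (hb : 0 < wordDegree b) : ∃ e, wordDegree (b - e * d) < wordDegree b := by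
  have hdeg := wordDegree_add_eq_of_mul_eq h (mul_ne_zero ha (ne_zero_of_wordDegree_pos hb))
  obtain ⟨p, hp, hpl⟩ := exists_length_eq_wordDegree ha
  -- Comparing the coefficients of `a * b = c * d` at the words `p * x` with `p` a top word of `a`
  -- and `|x| = deg b` shows that `e * d` and `b` have the same top homogeneous component.
  set e := (a.coeff p)⁻¹ • leftQuot p c
  have he : wordDegree e ≤ wordDegree b - wordDegree d :=
    (wordDegree_smul_le _).trans ((wordDegree_leftQuot_le p).trans (by omega))
  refine ⟨e, wordDegree_sub_lt_of_coeff_eq ?_ hb fun x hx => ?_⟩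
  · exact wordDegree_mul_le.trans (by omega)
  obtain ⟨y, z, rfl, hy, hz⟩ := FreeMonoid.exists_eq_mul_of_length_eq_add (x := x)
    (i := wordDegree b - wordDegree d) (j := wordDegree d) (by omega)
  have hcd : (c * d).coeff (p * y * z) = c.coeff (p * y) * d.coeff z :=
    coeff_mul_mul_of_wordDegree_le (by rw [FreeMonoid.length_mul]; omega) hz.ge
  have hab : (a * b).coeff (p * (y * z)) = a.coeff p * b.coeff (y * z) :=
    coeff_mul_mul_of_wordDegree_le hpl.ge hx.ge
  rw [coeff_mul_mul_of_wordDegree_le (he.trans hy.ge) hz.ge, coeff_smul_apply, coeff_leftQuot,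
    smul_eq_mul, mul_assoc, ← hcd, ← h, mul_assoc, hab, ← mul_assoc,
    inv_mul_cancel₀ (Finsupp.mem_support_iff.1 hp), one_mul]

end Field

end MonoidAlgebra

namespace IsComaximalRelation

open MonoidAlgebra

variable {k X : Type*} [Field k] {a b c d : MonoidAlgebra k (FreeMonoid X)}

theorem sub_mul_ne_zero (h : IsComaximalRelation a b c d) (hd : 0 < wordDegree d)
    (e : MonoidAlgebra k (FreeMonoid X)) : b - e * d ≠ 0 := fun h0 => by
  obtain ⟨y, hy⟩ := h.exists_mul_eq_one_of_eq_mul (sub_eq_zero.1 h0)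
  have := wordDegree_add_eq_zero_of_mul_eq_one hy
  omega

theorem wordDegree_eq (h : IsComaximalRelation a b c d) (ha : a ≠ 0) (hd : 0 < wordDegree d) :
    wordDegree a = wordDegree d := by
  induction hn : wordDegree b + wordDegree d using Nat.strong_induction_on
    generalizing a b c d with
  | _ n ih =>
    have hb : b ≠ 0 := by simpa using h.sub_mul_ne_zero hd 0
    have hdeg := wordDegree_add_eq_of_mul_eq h.mul_eq (mul_ne_zero ha hb)
    rcases Nat.eq_zero_or_pos (wordDegree b) with hb0 | hbpos
    · obtain ⟨x, hx⟩ :=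
        h.symm.exists_mul_eq_one_of_isUnit (isUnit_of_wordDegree_eq_zero hb hb0)
      have := wordDegree_add_eq_zero_of_mul_eq_one hx
      omega
    rcases le_or_gt (wordDegree d) (wordDegree b) with hdb | hbd
    · obtain ⟨e, he⟩ := exists_wordDegree_sub_mul_lt_of_mul_eq h.mul_eq ha hdb hbpos
      exact ih _ (by omega) (h.sub_mul e) ha hd rfl
    · have hc : c ≠ 0 := left_ne_zero_of_mul (h.mul_eq ▸ mul_ne_zero ha hb)
      obtain ⟨e, he⟩ := exists_wordDegree_sub_mul_lt_of_mul_eq h.mul_eq.symm hc hbd.le hd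
      have := ih _ (by omega) (h.symm.sub_mul e) hc hbpos rfl
      omega

theorem exists_wordDegree_sub_mul_lt (h : IsComaximalRelation a b c d) (ha : a ≠ 0)
    (hd : 0 < wordDegree d) : ∃ r, wordDegree (b - r * d) < wordDegree d := by
  let r := Function.argmin fun r => wordDegree (b - r * d)
  refine ⟨r, lt_of_not_ge fun hle => ?_⟩
  obtain ⟨e, he⟩ :=
    exists_wordDegree_sub_mul_lt_of_mul_eq (h.sub_mul r).mul_eq ha hle (hd.trans_le hle)
  rw [sub_sub, ← add_mul] at he
  exact (Function.argmin_le (fun r => wordDegree (b - r * d)) (r + e)).not_gt he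

theorem exists_mul_eq_mul_wordDegree_lt (h : IsComaximalRelation a b c d) (ha : a ≠ 0)
    (hd : 0 < wordDegree d) :
    wordDegree a = wordDegree d ∧ ∃ g₁ g₂, g₁ ≠ 0 ∧ g₂ ≠ 0 ∧ wordDegree g₁ < wordDegree a ∧
      wordDegree g₂ < wordDegree d ∧ a * g₁ = g₂ * d := by
  have hdeg := h.wordDegree_eq ha hd
  obtain ⟨r, hr⟩ := h.exists_wordDegree_sub_mul_lt ha hd
  have hmul := (h.sub_mul r).mul_eq
  have hg₁ := h.sub_mul_ne_zero hd r
  have hadd := wordDegree_add_eq_of_mul_eq hmul (mul_ne_zero ha hg₁)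
  exact ⟨hdeg, _, _, hg₁, left_ne_zero_of_mul (hmul ▸ mul_ne_zero ha hg₁), by omega, by omega,
    hmul⟩

end IsComaximalRelation

section FreeAlgebra

variable {k : Type*} [CommSemiring k] {d : ℕ} {f : FreeAlgebra k (Fin d)}

theorem ncDeg_eq_wordDegree (f : FreeAlgebra k (Fin d)) :
    ncDeg k d f = MonoidAlgebra.wordDegree (FreeAlgebra.equivMonoidAlgebraFreeMonoid f) := rfl

theorem Nonconstant.ne_zero (hf : Nonconstant k d f) : f ≠ 0 := by
  rintro rfl
  exact hf ⟨0, map_zero _⟩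

theorem Nonconstant.ncDeg_pos (hf : Nonconstant k d f) : 0 < ncDeg k d f := by
  refine Nat.pos_of_ne_zero fun h0 => hf ?_
  obtain ⟨r, hr⟩ := MonoidAlgebra.mem_range_algebraMap_of_wordDegree_eq_zero h0
  exact ⟨r, FreeAlgebra.equivMonoidAlgebraFreeMonoid.injective (by rw [AlgEquiv.commutes, hr])⟩

end FreeAlgebra

theorem stablyAssociated_deg_eq_and_witnesses_general (k : Type*) [Field k] (d : ℕ)
    (f₁ f₂ : FreeAlgebra k (Fin d))
    (h₁ : Nonconstant k d f₁) (h₂ : Nonconstant k d f₂)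
    (hsa : StablyAssociated k d f₁ f₂) :
    ncDeg k d f₁ = ncDeg k d f₂ ∧
      ∃ g₁ g₂ : FreeAlgebra k (Fin d), g₁ ≠ 0 ∧ g₂ ≠ 0 ∧
        ncDeg k d g₁ < ncDeg k d f₁ ∧ ncDeg k d g₂ < ncDeg k d f₂ ∧
        f₁ * g₁ = g₂ * f₂ := by
  obtain ⟨P₁, P₂, hP₁, hP₂, hP⟩ := hsa
  obtain ⟨α, u, h⟩ := exists_isComaximalRelation_of_diagonal_eq hP₁ hP₂ hP
  let ε := FreeAlgebra.equivMonoidAlgebraFreeMonoid (R := k) (X := Fin d)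
  obtain ⟨hdeg, g₁, g₂, hg₁, hg₂, hlt₁, hlt₂, hmul⟩ :=
    (h.map ε).exists_mul_eq_mul_wordDegree_lt (by simpa using h₁.ne_zero) h₂.ncDeg_pos
  refine ⟨hdeg, ε.symm g₁, ε.symm g₂, by simpa using hg₁, by simpa using hg₂, ?_, ?_, ?_⟩
  · rwa [ncDeg_eq_wordDegree, ncDeg_eq_wordDegree, AlgEquiv.apply_symm_apply]
  · rwa [ncDeg_eq_wordDegree, ncDeg_eq_wordDegree, AlgEquiv.apply_symm_apply]
  · exact ε.injective (by simpa using hmul)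

/-- If `f₁, f₂ ∈ k⟨x⟩` are nonconstant and stably associated, then `deg f₁ = deg f₂`
and there exist nonzero `g₁, g₂` of strictly smaller degree with `f₁ g₁ = g₂ f₂`. -/
theorem stablyAssociated_deg_eq_and_witnesses (k : Type*) [Field k] (d : ℕ) (hd : 0 < d)
    (f₁ f₂ : FreeAlgebra k (Fin d))
    (h₁ : Nonconstant k d f₁) (h₂ : Nonconstant k d f₂)
    (hsa : StablyAssociated k d f₁ f₂) :
    ncDeg k d f₁ = ncDeg k d f₂ ∧
      ∃ g₁ g₂ : FreeAlgebra k (Fin d), g₁ ≠ 0 ∧ g₂ ≠ 0 ∧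
        ncDeg k d g₁ < ncDeg k d f₁ ∧ ncDeg k d g₂ < ncDeg k d f₂ ∧
        f₁ * g₁ = g₂ * f₂ :=
  stablyAssociated_deg_eq_and_witnesses_general k d f₁ f₂ h₁ h₂ hsa
end

section
/- If f ∈ k⟨x⟩ is nonconstant, then there exists N ∈ ℕ such that for every n ≥ N the determinant det f(𝔛ⁿ) ∈ Rₙ is a nonconstant polynomial, i.e., it does not lie in the image of the structure map k → Rₙ. -/
/-- The evaluation of elements of `k⟨x⟩` at the tuple of generic `n × n` matrices,
whose entries are the commuting variables of the polynomial ring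
`Rₙ = k[(i,j,l) : i < d, j,l < n]`; the `(j,l)` entry of the `i`-th generic matrix is
the variable `(i,j,l)`. -/
noncomputable def genericEval (k : Type*) [CommSemiring k] (d n : ℕ) :
    FreeAlgebra k (Fin d) →ₐ[k]
      Matrix (Fin n) (Fin n) (MvPolynomial (Fin d × Fin n × Fin n) k) :=
  FreeAlgebra.lift k fun i => Matrix.of fun j l => MvPolynomial.X (i, j, l)

/-!
Specialise the generic matrices to `t • Aᵢ`, where `Aᵢ` is the cyclic shift on `Fin n` whose
entry in row `j` is a fresh commuting variable `y_{i,j}`, and `t` is one more variable. A word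
`w` goes to `t ^ |w| • A_w`, and `A_w` is the cyclic shift by `|w|` with the monomial
`∏ₛ y_{wₛ, j+s}` in row `j`. Let `D ≥ 1` be the maximal length of a word of `f` and `n ≥ D`.
The `t ^ D`-coefficient of `f(t • A)` is a cyclic shift by `D` with nonzero entries, because
distinct words of length `D ≤ n` give distinct monomials; so the `t ^ (n * D)`-coefficient of
`det f(t • A)` is, up to sign, the product of these entries. A constant `det f(𝔛ⁿ)` would
specialise to a polynomial of `t`-degree `0`.
-/

open Fin.NatCast Fin.CommRing Polynomial

namespace FreeAlgebra

variable {R X : Type*} [CommSemiring R]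

theorem basisFreeMonoid_apply (w : FreeMonoid X) :
    basisFreeMonoid R X w = FreeMonoid.lift (ι R) w := by
  simp [basisFreeMonoid, equivMonoidAlgebraFreeMonoid]

theorem algHom_apply_eq_sum_repr {B : Type*} [Semiring B] [Algebra R B]
    (φ : FreeAlgebra R X →ₐ[R] B) (f : FreeAlgebra R X) :
    φ f = ((basisFreeMonoid R X).repr f).sum fun w c => c • FreeMonoid.lift (φ ∘ ι R) w := by
  conv_lhs => rw [← (basisFreeMonoid R X).linearCombination_repr f]
  simp only [Finsupp.linearCombination_apply, map_finsuppSum, map_smul, basisFreeMonoid_apply]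
  exact Finsupp.sum_congr fun w _ =>
    congrArg _ (FreeMonoid.hom_map_lift (φ : FreeAlgebra R X →* B) (ι R) w)

noncomputable def totalDegree (f : FreeAlgebra R X) : ℕ :=
  ((basisFreeMonoid R X).repr f).support.sup FreeMonoid.length

theorem mem_range_algebraMap_of_totalDegree_eq_zero {f : FreeAlgebra R X}
    (hf : totalDegree f = 0) : f ∈ Set.range (algebraMap R (FreeAlgebra R X)) := by
  set c := (basisFreeMonoid R X).repr f
  have hc : c = Finsupp.single 1 (c 1) := by
    refine Finsupp.support_subset_singleton.1 fun w hw => ?_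
    have : w.length = 0 := Nat.eq_zero_of_le_zero (hf ▸ Finset.le_sup hw)
    simpa using FreeMonoid.length_eq_zero.1 this
  refine ⟨c 1, ?_⟩
  rw [← (basisFreeMonoid R X).linearCombination_repr f]
  change _ = Finsupp.linearCombination R _ c
  rw [hc, Finsupp.linearCombination_single]
  simp [basisFreeMonoid_apply, Algebra.algebraMap_eq_smul_one]

end FreeAlgebra

theorem Matrix.coeff_det_of_natDegree_le {ι R : Type*} [Fintype ι] [DecidableEq ι] [CommRing R]
    (M : Matrix ι ι R[X]) {D : ℕ} (hM : ∀ i j, (M i j).natDegree ≤ D) :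
    M.det.coeff (Fintype.card ι * D) = (M.map (coeff · D)).det := by
  simp only [Matrix.det_apply, finsetSum_coeff, coeff_smul, Matrix.map_apply]
  refine Finset.sum_congr rfl fun σ _ => congrArg _ ?_
  exact coeff_prod_of_natDegree_le _ _ D fun i _ => hM _ _

theorem Matrix.det_of_ite_eq_perm {ι R : Type*} [Fintype ι] [DecidableEq ι] [CommRing R]
    (σ : Equiv.Perm ι) (β : ι → R) :
    (Matrix.of fun i j => if j = σ i then β i else 0).det = Equiv.Perm.sign σ * ∏ i, β i := by
  rw [← det_diagonal, ← Equiv.Perm.sign_inv, ← det_permute']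
  congr
  ext i j
  simp [diagonal_apply, Equiv.eq_symm_apply, eq_comm]

theorem Polynomial.coeff_sum_C_mul_X_pow {α R : Type*} [Semiring R] (s : Finset α) (a : α → R)
    (e : α → ℕ) (D : ℕ) :
    (∑ x ∈ s, C (a x) * X ^ e x).coeff D = ∑ x ∈ s with e x = D, a x := by
  simp [Finset.sum_filter, eq_comm]

theorem Polynomial.natDegree_sum_C_mul_X_pow_le {α R : Type*} [Semiring R] {s : Finset α}
    (a : α → R) {e : α → ℕ} {D : ℕ} (he : ∀ x ∈ s, e x ≤ D) :
    (∑ x ∈ s, C (a x) * X ^ e x).natDegree ≤ D :=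
  natDegree_sum_le_of_forall_le _ _ fun x hx => (natDegree_C_mul_X_pow_le _ _).trans (he x hx)

theorem MvPolynomial.sum_monomial_ne_zero {α σ R : Type*} [CommSemiring R] {s : Finset α}
    {e : α → σ →₀ ℕ} (he : Set.InjOn e s) {c : α → R} {x₀ : α} (hx₀ : x₀ ∈ s) (hc : c x₀ ≠ 0) :
    ∑ x ∈ s, monomial (e x) (c x) ≠ 0 := by
  classical
  intro h
  apply hc
  have := congrArg (coeff (e x₀)) h
  rwa [coeff_sum, Finset.sum_eq_single x₀, coeff_monomial, if_pos rfl] at this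
  · intro x hx hne
    rw [coeff_monomial, if_neg fun h => hne (he hx hx₀ h)]
  · exact fun h => absurd hx₀ h

section WeightedShift

variable {k ι : Type*} [CommSemiring k] {n : ℕ} [NeZero n]

noncomputable def wordExponent : List ι → Fin n → (ι × Fin n →₀ ℕ)
  | [], _ => 0
  | i :: w, j => Finsupp.single (i, j) 1 + wordExponent w (j + 1)

theorem wordExponent_apply_add [DecidableEq ι] {w : List ι} (hw : w.length ≤ n) (j : Fin n) {s : ℕ}
    (hs : s < n) (i : ι) :
    wordExponent w j (i, j + s) = if w[s]? = some i then 1 else 0 := by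
  induction w generalizing j s with
  | nil => simp [wordExponent]
  | cons a w ih =>
    simp only [List.length_cons] at hw
    simp only [wordExponent, Finsupp.add_apply]
    cases s with
    | zero =>
      -- column `j` lies `n - 1` steps after `j + 1`, out of reach of `w`
      have hj : j + 1 + ((n - 1 : ℕ) : Fin n) = j := by
        rw [add_assoc, ← Nat.cast_one, ← Nat.cast_add, Nat.add_sub_cancel' NeZero.one_le,
          Fin.natCast_self, add_zero]
      have hzero : wordExponent w (j + 1) (i, j) = 0 := by
        simpa [hj, List.getElem?_eq_none (show w.length ≤ n - 1 by omega)] using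
          ih (by omega) (j + 1) (s := n - 1) (by omega)
      rw [Nat.cast_zero, add_zero, hzero]
      simp [Finsupp.single_apply, eq_comm]
    | succ s =>
      have hne : ((s + 1 : ℕ) : Fin n) ≠ 0 := by
        rw [Ne, Fin.natCast_eq_zero]
        exact fun h => s.succ_ne_zero (Nat.eq_zero_of_dvd_of_lt h hs)
      have hj : j + ((s + 1 : ℕ) : Fin n) = j + 1 + s := by push_cast; ring
      rw [Finsupp.single_eq_of_ne fun h => hne (by simpa using congrArg (·.2) h), hj,
        ih (by omega) _ (by omega)]
      simp

theorem wordExponent_injOn (j : Fin n) :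
    Set.InjOn (wordExponent · j) {w : List ι | w.length ≤ n} := by
  classical
  intro w₁ h₁ w₂ h₂ h
  refine List.ext_getElem? fun s => ?_
  by_cases hs : s < n
  · refine Option.ext fun i => ?_
    have := congrArg (· (i, j + s)) h
    simp only [wordExponent_apply_add h₁ j hs, wordExponent_apply_add h₂ j hs] at this
    split_ifs at this <;> simp_all
  · rw [List.getElem?_eq_none (by simp at h₁; omega), List.getElem?_eq_none (by simp at h₂; omega)]

variable (k n) in
noncomputable def weightedShift (i : ι) : Matrix (Fin n) (Fin n) (MvPolynomial (ι × Fin n) k) :=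
  Matrix.of fun j l => if l = j + 1 then MvPolynomial.X (i, j) else 0

theorem freeMonoidLift_weightedShift (w : FreeMonoid ι) :
    FreeMonoid.lift (weightedShift k n) w = Matrix.of fun j l : Fin n =>
      if l = j + w.length then MvPolynomial.monomial (wordExponent w.toList j) 1 else 0 := by
  induction w using FreeMonoid.inductionOn' with
  | one => ext j l : 1; simp [Matrix.one_apply, wordExponent, eq_comm]
  | of_mul i w ih =>
    ext j l : 1
    rw [map_mul, FreeMonoid.lift_eval_of, ih, Matrix.mul_apply, Finset.sum_eq_single (j + 1)]
    · simp [weightedShift, wordExponent, add_assoc, add_comm (1 : Fin n), MvPolynomial.X,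
        MvPolynomial.monomial_mul]
    · intro l' _ hl'
      simp [weightedShift, hl']
    · simp

variable (k n) in
noncomputable def scaledShift (i : ι) :
    Matrix (Fin n) (Fin n) (MvPolynomial (ι × Fin n) k)[X] :=
  (X : (MvPolynomial (ι × Fin n) k)[X]) • (weightedShift k n i).map C

theorem freeMonoidLift_scaledShift (w : FreeMonoid ι) :
    FreeMonoid.lift (scaledShift k n) w =
      (X : (MvPolynomial (ι × Fin n) k)[X]) ^ w.length •
        (FreeMonoid.lift (weightedShift k n) w).map C := by
  rw [FreeMonoid.lift_apply, FreeMonoid.lift_apply, ← RingHom.mapMatrix_apply, map_list_prod,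
    List.map_map, FreeMonoid.length, ← List.length_map (C.mapMatrix ∘ weightedShift k n),
    List.smul_prod, List.map_map]
  rfl

theorem freeAlgebraLift_scaledShift_apply (f : FreeAlgebra k ι) (j l : Fin n) :
    FreeAlgebra.lift k (scaledShift k n) f j l =
      ∑ w ∈ ((FreeAlgebra.basisFreeMonoid k ι).repr f).support,
        C (if l = j + w.length then
          MvPolynomial.monomial (wordExponent w.toList j)
            ((FreeAlgebra.basisFreeMonoid k ι).repr f w) else 0) * X ^ w.length := by
  rw [FreeAlgebra.algHom_apply_eq_sum_repr, Finsupp.sum, Matrix.sum_apply]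
  refine Finset.sum_congr rfl fun w _ => ?_
  have hι : ⇑(FreeAlgebra.lift k (scaledShift (ι := ι) k n)) ∘ FreeAlgebra.ι k = scaledShift k n :=
    funext fun i => FreeAlgebra.lift_ι_apply _ _
  simp only [hι, freeMonoidLift_scaledShift, freeMonoidLift_weightedShift, Matrix.smul_apply,
    Matrix.map_apply, Matrix.of_apply]
  rw [smul_eq_mul, mul_comm, ← smul_mul_assoc, Polynomial.smul_C, smul_ite,
    MvPolynomial.smul_monomial, smul_zero, smul_eq_mul, mul_one]

end WeightedShift

theorem genericEval_map_aeval {k S : Type*} [CommSemiring k] [CommSemiring S] [Algebra k S]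
    {d n : ℕ} (B : Fin d → Matrix (Fin n) (Fin n) S) (f : FreeAlgebra k (Fin d)) :
    (genericEval k d n f).map (MvPolynomial.aeval fun v => B v.1 v.2.1 v.2.2) =
      FreeAlgebra.lift k B f := by
  change ((MvPolynomial.aeval _).mapMatrix.comp (genericEval k d n)) f = _
  congr 1
  ext i j l
  simp [genericEval]

theorem det_lift_eq_aeval_det_genericEval {k S : Type*} [CommRing k] [CommRing S] [Algebra k S]
    {d n : ℕ} (B : Fin d → Matrix (Fin n) (Fin n) S) (f : FreeAlgebra k (Fin d)) :
    (FreeAlgebra.lift k B f).det =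
      MvPolynomial.aeval (fun v => B v.1 v.2.1 v.2.2) (genericEval k d n f).det := by
  rw [AlgHom.map_det, ← genericEval_map_aeval]
  rfl

theorem coeff_det_lift_scaledShift_ne_zero {k ι : Type*} [CommRing k] [IsDomain k] {n : ℕ}
    [NeZero n] {f : FreeAlgebra k ι} (hf : f ≠ 0) (hn : f.totalDegree ≤ n) :
    (FreeAlgebra.lift k (scaledShift k n) f).det.coeff (n * f.totalDegree) ≠ 0 := by
  classical
  set c := (FreeAlgebra.basisFreeMonoid k ι).repr f
  set D := f.totalDegree
  have hc : c.support.Nonempty := by simpa [c] using hf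
  obtain ⟨w₀, hw₀, hw₀D⟩ := c.support.exists_mem_eq_sup hc FreeMonoid.length
  set topWords := {w ∈ c.support | w.length = D}
  set β : Fin n → MvPolynomial (ι × Fin n) k :=
    fun j => ∑ w ∈ topWords, MvPolynomial.monomial (wordExponent w.toList j) (c w)
  have hdeg : ∀ j l, (FreeAlgebra.lift k (scaledShift k n) f j l).natDegree ≤ D := fun j l => by
    rw [freeAlgebraLift_scaledShift_apply]
    exact natDegree_sum_C_mul_X_pow_le _ fun w hw => Finset.le_sup hw
  have htop : (FreeAlgebra.lift k (scaledShift k n) f).map (coeff · D) =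
      Matrix.of fun j l => if l = Equiv.addRight (D : Fin n) j then β j else 0 := by
    ext j l : 1
    rw [Matrix.map_apply, freeAlgebraLift_scaledShift_apply, coeff_sum_C_mul_X_pow]
    simp only [Matrix.of_apply, Equiv.coe_addRight]
    rw [Finset.sum_congr rfl fun w hw => by rw [(Finset.mem_filter.1 hw).2]]
    by_cases h : l = j + D <;> simp [h, β, topWords, c]
  have hβ : ∀ j, β j ≠ 0 := fun j =>
    MvPolynomial.sum_monomial_ne_zero
      ((wordExponent_injOn j).comp FreeMonoid.toList.injective.injOn
        fun w hw => (Finset.mem_filter.1 hw).2.trans_le hn)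
      (Finset.mem_filter.2 ⟨hw₀, hw₀D.symm⟩) (Finsupp.mem_support_iff.1 hw₀)
  have hcoeff := Matrix.coeff_det_of_natDegree_le _ hdeg
  rw [Fintype.card_fin] at hcoeff
  rw [hcoeff, htop, Matrix.det_of_ite_eq_perm]
  refine mul_ne_zero ?_ (Finset.prod_ne_zero_iff.2 fun j _ => hβ j)
  rcases Int.units_eq_one_or (Equiv.Perm.sign (Equiv.addRight (D : Fin n))) with h | h <;> simp [h]

theorem det_genericEval_nonconstant_general (k : Type*) [Field k] (d : ℕ)
    (f : FreeAlgebra k (Fin d)) (hf : Nonconstant k d f) :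
    ∃ N : ℕ, ∀ n : ℕ, N ≤ n →
      (genericEval k d n f).det ∉
        Set.range (algebraMap k (MvPolynomial (Fin d × Fin n × Fin n) k)) := by
  have hD : 0 < f.totalDegree :=
    Nat.pos_of_ne_zero fun h => hf (FreeAlgebra.mem_range_algebraMap_of_totalDegree_eq_zero h)
  refine ⟨f.totalDegree, fun n hn ⟨κ, hκ⟩ => ?_⟩
  have : NeZero n := ⟨by omega⟩
  refine coeff_det_lift_scaledShift_ne_zero (fun h => hf ⟨0, by rw [h, map_zero]⟩) hn ?_
  rw [det_lift_eq_aeval_det_genericEval, ← hκ, AlgHom.commutes, Polynomial.algebraMap_apply,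
    Polynomial.coeff_C, if_neg (Nat.mul_pos (by omega) hD).ne']

/-- If `f ∈ k⟨x⟩` is nonconstant, then for all large enough `n` the determinant
`det f(𝔛ⁿ)` is a nonconstant commutative polynomial. -/
theorem det_genericEval_nonconstant (k : Type*) [Field k] (d : ℕ) (hd : 0 < d)
    (f : FreeAlgebra k (Fin d)) (hf : Nonconstant k d f) :
    ∃ N : ℕ, ∀ n : ℕ, N ≤ n →
      (genericEval k d n f).det ∉
        Set.range (algebraMap k (MvPolynomial (Fin d × Fin n × Fin n) k)) :=
  det_genericEval_nonconstant_general k d f hf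
end

section
/- Let h = ℓ₀ + ℓ₁² + ⋯ + ℓₘ² for some linear ℓ₀,…,ℓₘ ∈ ℝ⟨x⟩, and let β > 0. Then h + β is a sum of hermitian squares in ℝ⟨x⟩ if and only if the commutative collapse h(t) + β is a sum of squares in the polynomial ring ℝ[t₁,…,t_d]. -/
open scoped BigOperators

/-- `ℓ ∈ ℝ⟨x⟩` is linear if it is an `ℝ`-linear combination of the variables. -/
def IsLin (d : ℕ) (ℓ : FreeAlgebra ℝ (Fin d)) : Prop :=
  ∃ c : Fin d → ℝ, ℓ = ∑ i, c i • FreeAlgebra.ι ℝ i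

/-- `s ∈ ℝ⟨x⟩` is a sum of hermitian squares if `s = Σⱼ gⱼ* gⱼ`. -/
def IsSOHS (d : ℕ) (s : FreeAlgebra ℝ (Fin d)) : Prop :=
  ∃ (m : ℕ) (g : Fin m → FreeAlgebra ℝ (Fin d)), s = ∑ j, star (g j) * (g j)

/-- The commutative collapse `ℝ⟨x⟩ → ℝ[t₁,…,t_d]`, sending `xᵢ` to the commuting
variable `tᵢ`. -/
noncomputable def collapse (d : ℕ) :
    FreeAlgebra ℝ (Fin d) →ₐ[ℝ] MvPolynomial (Fin d) ℝ :=
  FreeAlgebra.lift ℝ fun i => MvPolynomial.X i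

/-- A multivariate real polynomial is a sum of squares. -/
def IsSOSmv (d : ℕ) (q : MvPolynomial (Fin d) ℝ) : Prop :=
  ∃ (m : ℕ) (g : Fin m → MvPolynomial (Fin d) ℝ), q = ∑ j, (g j) ^ 2

lemma collapse_star (d : ℕ) (a : FreeAlgebra ℝ (Fin d)) :
    collapse d (star a) = collapse d a := by
  induction a using FreeAlgebra.induction with
  | grade0 r => simp [FreeAlgebra.star_algebraMap]
  | grade1 x => simp [FreeAlgebra.star_ι]
  | mul a b ha hb => rw [star_mul, map_mul, map_mul, ha, hb, mul_comm]
  | add a b ha hb => rw [star_add, map_add, map_add, ha, hb]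

lemma eval_collapse_lin (d : ℕ) (v : Fin d → ℝ) (t : Fin d → ℝ) :
    MvPolynomial.eval t (collapse d (∑ j, v j • FreeAlgebra.ι ℝ j)) = ∑ j, v j * t j := by
  simp [collapse, map_sum, FreeAlgebra.lift_ι_apply]

lemma key (d m : ℕ) (c₀ : Fin d → ℝ) (c : Fin m → Fin d → ℝ) (β : ℝ)
    (hn : ∀ t : Fin d → ℝ,
      0 ≤ (∑ j, c₀ j * t j) + (∑ i, (∑ j, c i j * t j) ^ 2) + β) :
    ∃ a : Fin m → ℝ, (∀ j, c₀ j = ∑ i, a i * c i j) ∧ ∑ i, (a i) ^ 2 ≤ 4 * β := by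
  classical
  set M : Matrix (Fin m) (Fin d) ℝ := Matrix.of c with hM
  set M' : Matrix (Fin (m + 1)) (Fin d) ℝ := Matrix.of (Fin.snoc c c₀) with hM'
  -- if all rows of M kill v, then c₀ also kills v (from the nonnegativity hypothesis)
  have hc₀v : ∀ v : Fin d → ℝ, (∀ i, ∑ j, c i j * v j = 0) → ∑ j, c₀ j * v j = 0 := by
    intro v hci
    by_contra hr
    set r : ℝ := ∑ j, c₀ j * v j with hrdef
    set s : ℝ := -(β + 1) / r with hs
    have h1 := hn (fun j => s * v j)
    have h2 : ∑ j, c₀ j * (s * v j) = s * r := by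
      rw [hrdef, Finset.mul_sum]
      exact Finset.sum_congr rfl fun j _ => by ring
    have h3 : ∀ i, ∑ j, c i j * (s * v j) = 0 := by
      intro i
      have h3' : ∑ j, c i j * (s * v j) = s * ∑ j, c i j * v j := by
        rw [Finset.mul_sum]; exact Finset.sum_congr rfl fun j _ => by ring
      rw [h3', hci i, mul_zero]
    have h4 : s * r = -(β + 1) := div_mul_cancel₀ _ hr
    rw [h2, h4] at h1
    simp only [h3] at h1
    simp at h1
    linarith
  -- kernels of M and M' agree
  have hker : LinearMap.ker M'.mulVecLin = LinearMap.ker M.mulVecLin := by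
    apply le_antisymm
    · intro v hv
      rw [LinearMap.mem_ker, Matrix.mulVecLin_apply] at hv ⊢
      funext i
      have := congrFun hv (Fin.castSucc i)
      simpa [Matrix.mulVec, dotProduct, hM, hM', Fin.snoc_castSucc] using this
    · intro v hv
      rw [LinearMap.mem_ker, Matrix.mulVecLin_apply] at hv ⊢
      have hci : ∀ i, ∑ j, c i j * v j = 0 := by
        intro i
        have := congrFun hv i
        simpa [Matrix.mulVec, dotProduct, hM] using this
      funext i
      refine Fin.lastCases ?_ ?_ i
      · simpa [Matrix.mulVec, dotProduct, hM', Fin.snoc_last]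
          using hc₀v v hci
      · intro i
        simpa [Matrix.mulVec, dotProduct, hM', Fin.snoc_castSucc] using hci i
  -- hence the ranks agree
  have hrk : M'.rank = M.rank := by
    have e1 := LinearMap.finrank_range_add_finrank_ker M'.mulVecLin
    have e2 := LinearMap.finrank_range_add_finrank_ker M.mulVecLin
    rw [hker] at e1
    rw [Matrix.rank, Matrix.rank]
    omega
  -- ranges of the transposes agree
  have hle : LinearMap.range M.transpose.mulVecLin
      ≤ LinearMap.range M'.transpose.mulVecLin := by
    rintro x ⟨b, rfl⟩
    refine ⟨Fin.snoc b 0, ?_⟩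
    rw [Matrix.mulVecLin_apply, Matrix.mulVecLin_apply]
    funext j
    simp only [Matrix.mulVec, dotProduct, Matrix.transpose_apply]
    rw [Fin.sum_univ_castSucc]
    simp [hM, hM', Fin.snoc_castSucc, Fin.snoc_last]
  have htr : LinearMap.range M.transpose.mulVecLin
      = LinearMap.range M'.transpose.mulVecLin := by
    apply Submodule.eq_of_le_of_finrank_le hle
    have r1 : M'.transpose.rank = M'.rank := Matrix.rank_transpose M'
    have r2 : M.transpose.rank = M.rank := Matrix.rank_transpose M
    rw [Matrix.rank, Matrix.rank] at r1 r2
    rw [Matrix.rank, Matrix.rank] at hrk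
    omega
  -- c₀ is a row of M', hence in the range of M'ᵀ, hence of Mᵀ
  have hmem : c₀ ∈ LinearMap.range M.transpose.mulVecLin := by
    rw [htr]
    refine ⟨Pi.single (Fin.last m) 1, ?_⟩
    rw [Matrix.mulVecLin_apply]
    funext j
    simp only [Matrix.mulVec, dotProduct, Matrix.transpose_apply]
    rw [Finset.sum_eq_single (Fin.last m)]
    · simp [hM', Fin.snoc_last]
    · intro i _ hi; simp [Pi.single_eq_of_ne hi]
    · simp
  obtain ⟨b, hb⟩ := hmem
  rw [Matrix.mulVecLin_apply] at hb
  -- now use range (MᵀM) = range Mᵀ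
  have hrange : LinearMap.range (M.transpose * M).mulVecLin
      = LinearMap.range M.transpose.mulVecLin := by
    apply Submodule.eq_of_le_of_finrank_le
    · rw [Matrix.mulVecLin_mul]; exact LinearMap.range_comp_le_range _ _
    · have h1 : (M.transpose * M).rank = M.rank := Matrix.rank_transpose_mul_self M
      have h2 : M.transpose.rank = M.rank := Matrix.rank_transpose M
      rw [Matrix.rank, Matrix.rank] at h1 h2
      omega
  have hmem2 : c₀ ∈ LinearMap.range (M.transpose * M).mulVecLin := by
    rw [hrange]; exact ⟨b, by rw [Matrix.mulVecLin_apply, hb]⟩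
  obtain ⟨u, hu⟩ := hmem2
  rw [Matrix.mulVecLin_apply, ← Matrix.mulVec_mulVec] at hu
  set a : Fin m → ℝ := M.mulVec u with ha
  have hc₀ : ∀ j, c₀ j = ∑ i, a i * c i j := by
    intro j
    have := congrFun hu j
    simp only [Matrix.mulVec, dotProduct, Matrix.transpose_apply, hM,
      Matrix.of_apply] at this
    rw [← this]
    exact Finset.sum_congr rfl fun i _ => by rw [mul_comm]
  set t : Fin d → ℝ := fun j => -(1 / 2) * u j with ht
  have hct : ∀ i, ∑ j, c i j * t j = -(1 / 2) * a i := by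
    intro i
    have hai : a i = ∑ j, c i j * u j := rfl
    rw [hai, Finset.mul_sum]
    exact Finset.sum_congr rfl fun j _ => by rw [ht]; ring
  have hct0 : ∑ j, c₀ j * t j = -(1 / 2) * ∑ i, a i ^ 2 := by
    calc ∑ j, c₀ j * t j = ∑ j, (∑ i, a i * c i j) * t j :=
          Finset.sum_congr rfl fun j _ => by rw [← hc₀ j]
      _ = ∑ j, ∑ i, a i * (c i j * t j) :=
          Finset.sum_congr rfl fun j _ => by
            rw [Finset.sum_mul]; exact Finset.sum_congr rfl fun i _ => by ring
      _ = ∑ i, ∑ j, a i * (c i j * t j) := Finset.sum_comm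
      _ = ∑ i, a i * (-(1 / 2) * a i) :=
          Finset.sum_congr rfl fun i _ => by rw [← Finset.mul_sum, hct i]
      _ = -(1 / 2) * ∑ i, a i ^ 2 := by
          rw [Finset.mul_sum]; exact Finset.sum_congr rfl fun i _ => by ring
  have h5 := hn t
  have h6 : ∑ i, (∑ j, c i j * t j) ^ 2 = (1 / 4) * ∑ i, a i ^ 2 := by
    rw [Finset.mul_sum]
    exact Finset.sum_congr rfl fun i _ => by rw [hct i]; ring
  rw [hct0, h6] at h5
  exact ⟨a, hc₀, by linarith⟩

/-- For `h = ℓ₀ + ℓ₁² + ⋯ + ℓₘ²` with linear `ℓᵢ` and `β > 0`: `h + β` is a sum of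
hermitian squares in `ℝ⟨x⟩` iff its commutative collapse `h(t) + β` is a sum of squares
in `ℝ[t₁,…,t_d]`. -/
theorem sohs_iff_sos_collapse (d : ℕ) (hd : 0 < d) (m : ℕ)
    (ℓ₀ : FreeAlgebra ℝ (Fin d)) (ℓ : Fin m → FreeAlgebra ℝ (Fin d))
    (hℓ₀ : IsLin d ℓ₀) (hℓ : ∀ i, IsLin d (ℓ i))
    (h : FreeAlgebra ℝ (Fin d)) (hh : h = ℓ₀ + ∑ i, (ℓ i) ^ 2)
    (β : ℝ) (hβ : 0 < β) :
    IsSOHS d (h + algebraMap ℝ (FreeAlgebra ℝ (Fin d)) β) ↔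
      IsSOSmv d (collapse d h + MvPolynomial.C β) := by
  constructor
  · rintro ⟨n, g, hg⟩
    refine ⟨n, fun j => collapse d (g j), ?_⟩
    have hcg := congrArg (collapse d) hg
    rw [map_add, AlgHom.commutes, map_sum] at hcg
    rw [MvPolynomial.algebraMap_eq] at hcg
    rw [hcg]
    exact Finset.sum_congr rfl fun j _ => by
      rw [map_mul, collapse_star, sq]
  · rintro ⟨n, g, hg⟩
    obtain ⟨c₀, hc₀⟩ := hℓ₀
    choose c hc using hℓ
    -- nonnegativity of the collapsed polynomial
    have hn : ∀ t : Fin d → ℝ,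
        0 ≤ (∑ j, c₀ j * t j) + (∑ i, (∑ j, c i j * t j) ^ 2) + β := by
      intro t
      have he : MvPolynomial.eval t (collapse d h + MvPolynomial.C β)
          = (∑ j, c₀ j * t j) + (∑ i, (∑ j, c i j * t j) ^ 2) + β := by
        rw [hh, map_add, map_add, map_sum, map_add, map_sum]
        rw [MvPolynomial.eval_C]
        congr 1
        congr 1
        · rw [hc₀]; exact eval_collapse_lin d c₀ t
        · exact Finset.sum_congr rfl fun i _ => by
            rw [map_pow, map_pow, hc i, eval_collapse_lin]
      rw [← he, hg, map_sum]
      exact Finset.sum_nonneg fun j _ => by rw [map_pow]; positivity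
    obtain ⟨a, ha, haβ⟩ := key d m c₀ c β hn
    set γ : ℝ := β - (1 / 4) * ∑ i, a i ^ 2 with hγdef
    have hγ : 0 ≤ γ := by rw [hγdef]; linarith
    refine ⟨m + 1, Fin.snoc (fun i => ℓ i + algebraMap ℝ _ (a i / 2))
      (algebraMap ℝ _ (Real.sqrt γ)), ?_⟩
    rw [Fin.sum_univ_castSucc]
    simp only [Fin.snoc_castSucc, Fin.snoc_last]
    -- self-adjointness
    have hstar : ∀ i, star (ℓ i) = ℓ i := by
      intro i
      rw [hc i, star_sum]
      exact Finset.sum_congr rfl fun j _ => by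
        rw [Algebra.smul_def, star_mul, FreeAlgebra.star_ι, FreeAlgebra.star_algebraMap,
          ← Algebra.commutes, ← Algebra.smul_def]
    have hstar2 : ∀ i, star (ℓ i + algebraMap ℝ (FreeAlgebra ℝ (Fin d)) (a i / 2))
        = ℓ i + algebraMap ℝ (FreeAlgebra ℝ (Fin d)) (a i / 2) := by
      intro i
      rw [star_add, hstar i, FreeAlgebra.star_algebraMap]
    simp only [hstar2, FreeAlgebra.star_algebraMap]
    -- expand the squares
    have expand : ∀ i, (ℓ i + algebraMap ℝ (FreeAlgebra ℝ (Fin d)) (a i / 2))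
        * (ℓ i + algebraMap ℝ (FreeAlgebra ℝ (Fin d)) (a i / 2))
        = ℓ i ^ 2 + a i • ℓ i + algebraMap ℝ _ (a i ^ 2 / 4) := by
      intro i
      rw [add_mul, mul_add, mul_add, ← Algebra.commutes (a i / 2) (ℓ i),
        ← map_mul, ← Algebra.smul_def, ← sq]
      have : a i / 2 * (a i / 2) = a i ^ 2 / 4 := by ring
      rw [this]
      have h2 : (a i / 2) • ℓ i + (a i / 2) • ℓ i = a i • ℓ i := by
        rw [← add_smul]; norm_num
      rw [add_assoc, add_assoc, ← add_assoc ((a i / 2) • ℓ i), h2]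
    simp only [expand]
    -- ℓ₀ as a combination of the ℓ i
    have hℓ₀a : ℓ₀ = ∑ i, a i • ℓ i := by
      rw [hc₀]
      calc ∑ j, c₀ j • FreeAlgebra.ι ℝ j
          = ∑ j, ∑ i, (a i * c i j) • FreeAlgebra.ι ℝ j := by
            refine Finset.sum_congr rfl fun j _ => ?_
            rw [ha j, Finset.sum_smul]
        _ = ∑ i, ∑ j, (a i * c i j) • FreeAlgebra.ι ℝ j := Finset.sum_comm
        _ = ∑ i, a i • ℓ i := by
            refine Finset.sum_congr rfl fun i _ => ?_
            rw [hc i, Finset.smul_sum]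
            exact Finset.sum_congr rfl fun j _ => (smul_smul _ _ _).symm
    -- put everything together
    rw [Finset.sum_add_distrib, Finset.sum_add_distrib]
    rw [← map_mul, Real.mul_self_sqrt hγ]
    rw [← map_sum, hh, hℓ₀a]
    rw [add_assoc, add_assoc, ← map_add]
    have : (∑ i, a i ^ 2 / 4) + γ = β := by
      rw [hγdef]
      have : ∑ i, a i ^ 2 / 4 = (1 / 4) * ∑ i, a i ^ 2 := by
        rw [Finset.mul_sum]; exact Finset.sum_congr rfl fun i _ => by ring
      rw [this]; ring
    rw [this, add_comm (∑ i, ℓ i ^ 2) (∑ i, a i • ℓ i), ← add_assoc]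
end

section
/- Let h = ℓ₀ + ℓ₁² + ⋯ + ℓₘ² for some linear ℓ₀,…,ℓₘ ∈ ℝ⟨x⟩ and let α, β > 0. If D₁(α − h) ⊆ D₁(β + h), then β + h is a sum of hermitian squares in ℝ⟨x⟩. -/
open scoped BigOperators

/-- `D₁(g)`: the closure of the connected component of the origin of
`{τ ∈ ℝ^d : g(τ) > 0}` (identifying symmetric `1 × 1` matrices with `ℝ`). -/
def D1 (d : ℕ) (g : FreeAlgebra ℝ (Fin d)) : Set (Fin d → ℝ) :=
  closure (connectedComponentIn
    {τ : Fin d → ℝ | 0 < (FreeAlgebra.lift ℝ τ) g} 0)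

/-! The scalar evaluation of `h` is `f τ = c₀ ⬝ᵥ τ + Σⱼ (Cⱼ ⬝ᵥ τ)²`, and `f (s • τ) ≤ s * f τ` for
`s ∈ [0, 1]`. So `{f < α}` is star-shaped about the origin, `D₁(α - h)` is its closure, and the
inclusion forces `f ≥ -β` on `{f < α}`, hence everywhere. A function `⟪c, τ⟫ + ‖A τ‖²` bounded
below has `c ⊥ ker A`, i.e. `c = A† A u`, and its value `-‖A u‖² / 4` at `-u/2` gives
`‖A u‖² ≤ 4β`. With `a = A u` this says `ℓ₀ = Σⱼ aⱼ ℓⱼ`, and completing squares,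
`β + h = Σⱼ (aⱼ/2 + ℓⱼ)² + (β - ‖a‖²/4)`. -/

open FreeAlgebra Matrix Set

theorem continuous_lift_apply {σ : Type*} (g : FreeAlgebra ℝ σ) :
    Continuous fun τ : σ → ℝ => lift ℝ τ g := by
  induction g using FreeAlgebra.induction with
  | grade0 r => simpa using continuous_const
  | grade1 i => simpa using continuous_apply i
  | mul a b ha hb => simp only [map_mul]; exact ha.mul hb
  | add a b ha hb => simp only [map_add]; exact ha.add hb

theorem lift_sum_smul_ι {σ : Type*} [Fintype σ] (c τ : σ → ℝ) :
    lift ℝ τ (∑ i, c i • ι ℝ i) = c ⬝ᵥ τ := by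
  simp [map_sum, dotProduct]

theorem star_sum_smul_ι {σ : Type*} [Fintype σ] (c : σ → ℝ) :
    star (∑ i, c i • ι ℝ i) = ∑ i, c i • ι ℝ i := by
  rw [star_sum]
  congr! 1 with i
  rw [Algebra.smul_def, star_mul, star_ι, star_algebraMap, ← Algebra.commutes]

theorem sum_smul_ι_vecMul {σ κ : Type*} [Fintype σ] [Fintype κ] (a : κ → ℝ) (C : Matrix κ σ ℝ) :
    ∑ i, (a ᵥ* C) i • ι ℝ i = ∑ j, a j • ∑ i, C j i • ι ℝ i := by
  simp only [vecMul_eq_sum, Finset.sum_apply, Finset.sum_smul, Finset.smul_sum, Pi.smul_apply,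
    smul_eq_mul, mul_smul]
  exact Finset.sum_comm

theorem starConvex_setOf_lt {E : Type*} [AddCommGroup E] [Module ℝ E] {φ : E → ℝ}
    (hφ : ∀ x, ∀ s ∈ Icc (0 : ℝ) 1, φ (s • x) ≤ s * φ x) {α : ℝ} (hα : 0 < α) :
    StarConvex ℝ 0 {x | φ x < α} := by
  intro x hx a b ha hb hab
  have := hφ x b ⟨hb, by linarith⟩
  simp only [smul_zero, zero_add, mem_ofPred_eq] at hx ⊢
  rcases hb.eq_or_lt with rfl | hb
  · linarith
  · nlinarith [mul_nonneg ha hα.le, mul_pos hb (sub_pos.2 hx)]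

theorem D1_subset_setOf_nonneg (d : ℕ) (g : FreeAlgebra ℝ (Fin d)) :
    D1 d g ⊆ {τ | 0 ≤ lift ℝ τ g} :=
  closure_minimal
    ((connectedComponentIn_subset _ _).trans (ofPred_subset_ofPred.2 fun _ => le_of_lt))
    (isClosed_le continuous_const (continuous_lift_apply g))

theorem setOf_pos_subset_D1 {d : ℕ} {g : FreeAlgebra ℝ (Fin d)}
    (hg : StarConvex ℝ (0 : Fin d → ℝ) {τ | 0 < lift ℝ τ g}) :
    {τ | 0 < lift ℝ τ g} ⊆ D1 d g := by
  intro τ hτ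
  have h0 := hg.mem ⟨τ, hτ⟩
  refine subset_closure ?_
  rwa [(hg.isPathConnected h0).isConnected.isPreconnected.connectedComponentIn h0]

theorem LinearMap.exists_adjoint_apply_eq_of_forall_le {E F : Type*}
    [NormedAddCommGroup E] [InnerProductSpace ℝ E] [FiniteDimensional ℝ E]
    [NormedAddCommGroup F] [InnerProductSpace ℝ F] [FiniteDimensional ℝ F]
    (A : E →ₗ[ℝ] F) (c : E) {β : ℝ} (h : ∀ x, -β ≤ inner ℝ c x + ‖A x‖ ^ 2) :
    ∃ u, A.adjoint (A u) = c ∧ ‖A u‖ ^ 2 ≤ 4 * β := by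
  have hc : c ∈ (LinearMap.ker A)ᗮ := by
    intro w hw
    rw [LinearMap.mem_ker] at hw
    by_contra hne
    have hw' := h ((-(β + 1) / inner ℝ c w) • w)
    rw [map_smul, hw, smul_zero, norm_zero, inner_smul_right, real_inner_comm] at hw'
    field_simp at hw'
    linarith
  rw [LinearMap.orthogonal_ker, ← LinearMap.range_adjoint_comp_self] at hc
  obtain ⟨u, rfl⟩ := hc
  refine ⟨u, rfl, ?_⟩
  have hmin := h ((-(1 / 2) : ℝ) • u)
  rw [LinearMap.comp_apply, map_smul, inner_smul_right, LinearMap.adjoint_inner_left, norm_smul,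
    real_inner_self_eq_norm_sq] at hmin
  norm_num at hmin
  nlinarith

theorem Matrix.exists_vecMul_eq_of_forall_le {m n : Type*} [Fintype m] [Fintype n]
    (C : Matrix m n ℝ) (c : n → ℝ) {β : ℝ} (h : ∀ τ, -β ≤ c ⬝ᵥ τ + ∑ j, (C j ⬝ᵥ τ) ^ 2) :
    ∃ a : m → ℝ, a ᵥ* C = c ∧ ∑ j, a j ^ 2 ≤ 4 * β := by
  classical
  obtain ⟨u, hu, hβ⟩ := C.toEuclideanLin.exists_adjoint_apply_eq_of_forall_le (WithLp.toLp 2 c)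
    fun x => by
      convert h x.ofLp using 2
      · simp [EuclideanSpace.inner_eq_star_dotProduct, dotProduct_comm]
      · simp [EuclideanSpace.real_norm_sq_eq, mulVec]
  refine ⟨C *ᵥ u.ofLp, ?_, ?_⟩
  · rw [← toEuclideanLin_conjTranspose_eq_adjoint] at hu
    simpa only [conjTranspose_eq_transpose_of_trivial, ofLp_toLpLin, toLin'_apply,
      mulVec_transpose] using congrArg WithLp.ofLp hu
  · simpa [EuclideanSpace.real_norm_sq_eq] using hβ

namespace IsSOHS

variable {d : ℕ}

theorem zero : IsSOHS d 0 := ⟨0, Fin.elim0, by simp⟩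

theorem add {a b : FreeAlgebra ℝ (Fin d)} (ha : IsSOHS d a) (hb : IsSOHS d b) :
    IsSOHS d (a + b) := by
  obtain ⟨m, f, rfl⟩ := ha
  obtain ⟨n, g, rfl⟩ := hb
  exact ⟨m + n, Fin.append f g, by simp [Fin.sum_univ_add]⟩

theorem star_mul_self (g : FreeAlgebra ℝ (Fin d)) : IsSOHS d (star g * g) :=
  ⟨1, fun _ => g, by simp⟩

theorem sum {κ : Type*} (s : Finset κ) {f : κ → FreeAlgebra ℝ (Fin d)}
    (hf : ∀ j ∈ s, IsSOHS d (f j)) : IsSOHS d (∑ j ∈ s, f j) :=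
  Finset.sum_induction _ _ (fun _ _ => add) zero hf

theorem algebraMap_of_nonneg {r : ℝ} (hr : 0 ≤ r) : IsSOHS d (algebraMap ℝ _ r) := by
  simpa [star_algebraMap, ← map_mul, Real.mul_self_sqrt hr] using
    star_mul_self (algebraMap ℝ (FreeAlgebra ℝ (Fin d)) √r)

end IsSOHS

theorem star_mul_self_algebraMap_add {σ : Type*} {a : FreeAlgebra ℝ σ} (ha : star a = a)
    (t : ℝ) :
    star (algebraMap ℝ _ t + a) * (algebraMap ℝ _ t + a) =
      algebraMap ℝ _ (t ^ 2) + (2 * t) • a + a ^ 2 := by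
  rw [star_add, ha, star_algebraMap]
  simp only [Algebra.algebraMap_eq_smul_one, add_mul, mul_add, smul_add, smul_mul_assoc,
    mul_smul_comm, one_mul, mul_one, smul_smul, sq, two_mul, add_smul]
  abel

theorem isSOHS_algebraMap_add_sum_smul_add_sum_sq {d m : ℕ}
    {ℓ : Fin m → FreeAlgebra ℝ (Fin d)} (hℓ : ∀ j, star (ℓ j) = ℓ j) {a : Fin m → ℝ} {β : ℝ} (ha : ∑ j, a j ^ 2 ≤ 4 * β) :
    IsSOHS d (algebraMap ℝ _ β + (∑ j, a j • ℓ j + ∑ j, ℓ j ^ 2)) := by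
  have hsq : algebraMap ℝ _ β + (∑ j, a j • ℓ j + ∑ j, ℓ j ^ 2) =
      algebraMap ℝ _ (β - ∑ j, (a j / 2) ^ 2) +
        ∑ j, star (algebraMap ℝ _ (a j / 2) + ℓ j) * (algebraMap ℝ _ (a j / 2) + ℓ j) := by
    have two_mul_half (j : Fin m) : 2 * (a j / 2) = a j := by ring
    simp only [star_mul_self_algebraMap_add (hℓ _), two_mul_half, Finset.sum_add_distrib,
      ← map_sum, map_sub]
    abel
  rw [hsq]
  refine (IsSOHS.algebraMap_of_nonneg ?_).add (IsSOHS.sum _ fun j _ => IsSOHS.star_mul_self _)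
  have hquarter : ∑ j, (a j / 2) ^ 2 = (∑ j, a j ^ 2) / 4 := by
    rw [Finset.sum_div]; congr! 1; ring
  linarith

theorem sohs_of_D1_subset_general (d : ℕ) (m : ℕ)
    (ℓ₀ : FreeAlgebra ℝ (Fin d)) (ℓ : Fin m → FreeAlgebra ℝ (Fin d))
    (hℓ₀ : IsLin d ℓ₀) (hℓ : ∀ i, IsLin d (ℓ i))
    (h : FreeAlgebra ℝ (Fin d)) (hh : h = ℓ₀ + ∑ i, (ℓ i) ^ 2)
    (α β : ℝ) (hα : 0 < α) (hβ : 0 < β)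
    (hsub : D1 d (algebraMap ℝ (FreeAlgebra ℝ (Fin d)) α - h) ⊆
            D1 d (algebraMap ℝ (FreeAlgebra ℝ (Fin d)) β + h)) :
    IsSOHS d (algebraMap ℝ (FreeAlgebra ℝ (Fin d)) β + h) := by
  obtain ⟨c₀, rfl⟩ := hℓ₀
  obtain ⟨C, hC⟩ : ∃ C : Matrix (Fin m) (Fin d) ℝ, ∀ j, ℓ j = ∑ i, C j i • ι ℝ i :=
    ⟨_, fun j => (hℓ j).choose_spec⟩
  have heval (τ : Fin d → ℝ) : lift ℝ τ h = c₀ ⬝ᵥ τ + ∑ j, (C j ⬝ᵥ τ) ^ 2 := by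
    rw [hh, map_add, lift_sum_smul_ι, map_sum]
    simp only [map_pow, hC, lift_sum_smul_ι]
  have hsubhom (τ : Fin d → ℝ) (s : ℝ) (hs : s ∈ Icc (0 : ℝ) 1) :
      lift ℝ (s • τ) h ≤ s * lift ℝ τ h := by
    simp only [heval, dotProduct_smul, smul_eq_mul, mul_pow, ← Finset.mul_sum]
    have hQ : 0 ≤ ∑ j, (C j ⬝ᵥ τ) ^ 2 := Finset.sum_nonneg fun j _ => sq_nonneg _
    nlinarith [mul_nonneg (mul_nonneg hs.1 (sub_nonneg.2 hs.2)) hQ]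
  have hstar : StarConvex ℝ (0 : Fin d → ℝ) {τ | 0 < lift ℝ τ (algebraMap ℝ _ α - h)} := by
    simp only [map_sub, AlgHom.commutes, Algebra.algebraMap_self_apply, sub_pos]
    exact starConvex_setOf_lt hsubhom hα
  have hbound (τ : Fin d → ℝ) : -β ≤ c₀ ⬝ᵥ τ + ∑ j, (C j ⬝ᵥ τ) ^ 2 := by
    rw [← heval]
    by_cases hτ : lift ℝ τ h < α
    · have hD1 := D1_subset_setOf_nonneg d _ (hsub (setOf_pos_subset_D1 hstar (by simpa using hτ)))
      simp only [mem_ofPred_eq, map_add, AlgHom.commutes, Algebra.algebraMap_self_apply] at hD1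
      linarith
    · linarith
  obtain ⟨a, rfl, ha⟩ := C.exists_vecMul_eq_of_forall_le c₀ hbound
  rw [hh, sum_smul_ι_vecMul]
  simp only [← hC]
  exact isSOHS_algebraMap_add_sum_smul_add_sum_sq (fun j => hC j ▸ star_sum_smul_ι (C j)) ha

/-- For `h = ℓ₀ + ℓ₁² + ⋯ + ℓₘ²` with linear `ℓᵢ` and `α, β > 0`: if
`D₁(α - h) ⊆ D₁(β + h)`, then `β + h` is a sum of hermitian squares. -/
theorem sohs_of_D1_subset (d : ℕ) (hd : 0 < d) (m : ℕ)
    (ℓ₀ : FreeAlgebra ℝ (Fin d)) (ℓ : Fin m → FreeAlgebra ℝ (Fin d))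
    (hℓ₀ : IsLin d ℓ₀) (hℓ : ∀ i, IsLin d (ℓ i))
    (h : FreeAlgebra ℝ (Fin d)) (hh : h = ℓ₀ + ∑ i, (ℓ i) ^ 2)
    (α β : ℝ) (hα : 0 < α) (hβ : 0 < β)
    (hsub : D1 d (algebraMap ℝ (FreeAlgebra ℝ (Fin d)) α - h) ⊆
            D1 d (algebraMap ℝ (FreeAlgebra ℝ (Fin d)) β + h)) :
    IsSOHS d (algebraMap ℝ (FreeAlgebra ℝ (Fin d)) β + h) :=
  sohs_of_D1_subset_general d m ℓ₀ ℓ hℓ₀ hℓ h hh α β hα hβ hsub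
end

section
/- If f = ℓ₀ + ℓ₁² + ⋯ + ℓₘ² for some linear ℓ₀,…,ℓₘ ∈ ℝ⟨x⟩, then Dₙ(1 − f) is a convex subset of the space of d-tuples of n×n real matrices for every n ∈ ℕ. -/
open scoped BigOperators

/-- Evaluation of `f ∈ ℝ⟨x⟩` at a `d`-tuple of `n × n` real matrices. -/
noncomputable def freeEvalR (d n : ℕ) (X : Fin d → Matrix (Fin n) (Fin n) ℝ) :
    FreeAlgebra ℝ (Fin d) →ₐ[ℝ] Matrix (Fin n) (Fin n) ℝ :=
  FreeAlgebra.lift ℝ X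

/-- `Dₙ(g)`: the closure of the connected component of the origin of
`{X ∈ 𝕊ₙ^d : g(X) ≻ 0}`, inside the space of `d`-tuples of `n × n` real matrices. -/
def Dn (d n : ℕ) (g : FreeAlgebra ℝ (Fin d)) : Set (Fin d → Matrix (Fin n) (Fin n) ℝ) :=
  closure (connectedComponentIn
    {X : Fin d → Matrix (Fin n) (Fin n) ℝ |
      (∀ i, (X i).IsSymm) ∧ (freeEvalR d n X g).PosDef} 0)

/-!
Writing `g = 1 - (ℓ₀ + ∑ ℓⱼ²)`, the identity
`(a p + (1 - a) q)² = a p² + (1 - a) q² - a (1 - a) (p - q)²` shows that along a segment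
`g(a X + (1 - a) Y) = a g(X) + (1 - a) g(Y) + a (1 - a) ∑ (ℓⱼ(X) - ℓⱼ(Y))²`,
and the last sum is positive semidefinite on symmetric tuples. Hence the set where `g ≻ 0` is
already convex, so it is its own connected component, and its closure is convex.
-/

theorem sq_convexComb {R A : Type*} [CommRing R] [Ring A] [Algebra R A] (a : R) (p q : A) :
    (a • p + (1 - a) • q) ^ 2 = a • p ^ 2 + (1 - a) • q ^ 2 - (a * (1 - a)) • (p - q) ^ 2 := by
  simp only [sq, add_mul, mul_add, sub_mul, mul_sub, smul_mul_smul_comm, smul_sub]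
  module

theorem Matrix.IsSymm.posSemidef_sq {n : Type*} [Fintype n] [DecidableEq n] {A : Matrix n n ℝ}
    (hA : A.IsSymm) : (A ^ 2).PosSemidef := by
  simpa [sq, hA.eq] using posSemidef_conjTranspose_mul_self A

theorem Convex.closure_connectedComponentIn {E : Type*} [AddCommGroup E] [Module ℝ E]
    [TopologicalSpace E] [IsTopologicalAddGroup E] [ContinuousSMul ℝ E] {s : Set E}
    (hs : Convex ℝ s) (x : E) : Convex ℝ (closure (connectedComponentIn s x)) := by
  by_cases hx : x ∈ s
  · rw [hs.isPreconnected.connectedComponentIn hx]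
    exact hs.closure
  · simpa [connectedComponentIn_eq_empty hx] using convex_empty

namespace IsLin

variable {d n : ℕ} {ℓ : FreeAlgebra ℝ (Fin d)}

theorem isLinearMap_freeEvalR (hℓ : IsLin d ℓ) :
    IsLinearMap ℝ fun X : Fin d → Matrix (Fin n) (Fin n) ℝ => freeEvalR d n X ℓ := by
  obtain ⟨c, rfl⟩ := hℓ
  constructor
  · intro X Y
    simp [freeEvalR, smul_add, Finset.sum_add_distrib]
  · intro a X
    simp [freeEvalR, Finset.smul_sum, smul_comm a]

theorem isSymm_freeEvalR (hℓ : IsLin d ℓ) {X : Fin d → Matrix (Fin n) (Fin n) ℝ}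
    (hX : ∀ i, (X i).IsSymm) : (freeEvalR d n X ℓ).IsSymm := by
  obtain ⟨c, rfl⟩ := hℓ
  simpa [freeEvalR, Matrix.IsSymm, Matrix.transpose_sum] using
    Finset.sum_congr rfl fun i _ => (hX i).smul (c i)

end IsLin

section OneSubSumSq

variable {d n : ℕ} {ι : Type*} [Fintype ι] {ℓ₀ : FreeAlgebra ℝ (Fin d)}
  {ℓ : ι → FreeAlgebra ℝ (Fin d)}

theorem freeEvalR_one_sub_sum_sq_convexComb (hℓ₀ : IsLin d ℓ₀) (hℓ : ∀ j, IsLin d (ℓ j))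
    (X Y : Fin d → Matrix (Fin n) (Fin n) ℝ) (a : ℝ) :
    freeEvalR d n (a • X + (1 - a) • Y) (1 - (ℓ₀ + ∑ j, ℓ j ^ 2)) =
      a • freeEvalR d n X (1 - (ℓ₀ + ∑ j, ℓ j ^ 2)) +
        (1 - a) • freeEvalR d n Y (1 - (ℓ₀ + ∑ j, ℓ j ^ 2)) +
        (a * (1 - a)) • ∑ j, (freeEvalR d n X (ℓ j) - freeEvalR d n Y (ℓ j)) ^ 2 := by
  have hconvexComb : ∀ {k}, IsLin d k → freeEvalR d n (a • X + (1 - a) • Y) k =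
      a • freeEvalR d n X k + (1 - a) • freeEvalR d n Y k := fun hk => by
    rw [hk.isLinearMap_freeEvalR.map_add, hk.isLinearMap_freeEvalR.map_smul,
      hk.isLinearMap_freeEvalR.map_smul]
  simp only [map_sub, map_one, map_add, map_sum, map_pow, hconvexComb hℓ₀, hconvexComb (hℓ _),
    sq_convexComb, Finset.sum_sub_distrib, Finset.sum_add_distrib, ← Finset.smul_sum]
  module

theorem convex_setOf_posDef_one_sub_sum_sq (hℓ₀ : IsLin d ℓ₀) (hℓ : ∀ j, IsLin d (ℓ j)) :
    Convex ℝ {X : Fin d → Matrix (Fin n) (Fin n) ℝ |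
      (∀ i, (X i).IsSymm) ∧ (freeEvalR d n X (1 - (ℓ₀ + ∑ j, ℓ j ^ 2))).PosDef} := by
  rw [convex_iff_forall_pos]
  rintro X ⟨hXsymm, hXpos⟩ Y ⟨hYsymm, hYpos⟩ a b ha hb hab
  obtain rfl : b = 1 - a := by linarith
  refine ⟨fun i => ((hXsymm i).smul a).add ((hYsymm i).smul (1 - a)), ?_⟩
  have hdiff : (∑ j, (freeEvalR d n X (ℓ j) - freeEvalR d n Y (ℓ j)) ^ 2).PosSemidef :=
    Matrix.posSemidef_sum _ fun j _ =>
      ((hℓ j).isSymm_freeEvalR hXsymm).sub ((hℓ j).isSymm_freeEvalR hYsymm) |>.posSemidef_sq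
  rw [freeEvalR_one_sub_sum_sq_convexComb hℓ₀ hℓ]
  exact ((hXpos.smul ha).add (hYpos.smul hb)).add_posSemidef
    (hdiff.smul (mul_pos ha hb).le)

end OneSubSumSq

theorem Dn_one_sub_convex_general (d : ℕ) (m : ℕ)
    (ℓ₀ : FreeAlgebra ℝ (Fin d)) (ℓ : Fin m → FreeAlgebra ℝ (Fin d))
    (hℓ₀ : IsLin d ℓ₀) (hℓ : ∀ i, IsLin d (ℓ i))
    (f : FreeAlgebra ℝ (Fin d)) (hf : f = ℓ₀ + ∑ i, (ℓ i) ^ 2) :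
    ∀ n : ℕ, Convex ℝ (Dn d n (1 - f)) := by
  intro n
  subst hf
  exact (convex_setOf_posDef_one_sub_sum_sq hℓ₀ hℓ).closure_connectedComponentIn 0

/-- If `f = ℓ₀ + ℓ₁² + ⋯ + ℓₘ²` for linear `ℓ₀, …, ℓₘ`, then `Dₙ(1 - f)` is convex for
every `n ∈ ℕ`. -/
theorem Dn_one_sub_convex (d : ℕ) (hd : 0 < d) (m : ℕ)
    (ℓ₀ : FreeAlgebra ℝ (Fin d)) (ℓ : Fin m → FreeAlgebra ℝ (Fin d))
    (hℓ₀ : IsLin d ℓ₀) (hℓ : ∀ i, IsLin d (ℓ i))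
    (f : FreeAlgebra ℝ (Fin d)) (hf : f = ℓ₀ + ∑ i, (ℓ i) ^ 2) :
    ∀ n : ℕ, Convex ℝ (Dn d n (1 - f)) :=
  Dn_one_sub_convex_general d m ℓ₀ ℓ hℓ₀ hℓ f hf
end

section
/- Let ℓ₀, ℓ₁, …, ℓₘ : ℝ^d → ℝ be linear functionals and define q : ℝ^d → ℝ by q(t) = ℓ₀(t) + ℓ₁(t)² + ⋯ + ℓₘ(t)². Then q is bounded below on ℝ^d if and only if ℓ₀ lies in the linear span of ℓ₁, …, ℓₘ. Moreover, if ℓ₁, …, ℓₘ are linearly independent and ℓ₀ = α₁ℓ₁ + ⋯ + αₘℓₘ for real scalars αᵢ, then the infimum of q over ℝ^d equals −(α₁² + ⋯ + αₘ²)/4. -/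
open scoped BigOperators

/-- If the functionals `ℓ i` are linearly independent, the map `t ↦ (ℓ i t)_i` is
surjective. -/
lemma pi_surjective_of_linearIndependent {d m : ℕ}
    (ℓ : Fin m → ((Fin d → ℝ) →ₗ[ℝ] ℝ)) (hli : LinearIndependent ℝ ℓ) :
    Function.Surjective (LinearMap.pi ℓ : (Fin d → ℝ) →ₗ[ℝ] (Fin m → ℝ)) := by
  rw [← LinearMap.range_eq_top]
  by_contra h
  obtain ⟨f, hf0, hf⟩ := Submodule.exists_dual_map_eq_bot_of_lt_top
    (lt_top_iff_ne_top.mpr h) inferInstance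
  have hv : ∀ x : Fin d → ℝ, f (LinearMap.pi ℓ x) = 0 := by
    intro x
    have : f (LinearMap.pi ℓ x) ∈ (LinearMap.range (LinearMap.pi ℓ)).map f :=
      ⟨_, ⟨x, rfl⟩, rfl⟩
    rw [hf] at this
    simpa using this
  set c : Fin m → ℝ := fun i => f (Pi.single i 1) with hc
  have hfy : ∀ y : Fin m → ℝ, f y = ∑ i, y i * c i := by
    intro y
    have hy : y = ∑ i, y i • (Pi.single i 1 : Fin m → ℝ) := by
      funext j
      simp [Finset.sum_apply, Pi.single_apply, Finset.sum_ite_eq', mul_comm]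
    conv_lhs => rw [hy]
    simp [hc, smul_eq_mul]
  have hzero : ∀ i, c i = 0 := by
    have hsum : ∑ i, c i • ℓ i = 0 := by
      apply LinearMap.ext; intro x
      have := hv x
      rw [hfy] at this
      simpa [LinearMap.pi_apply, mul_comm] using this
    exact Fintype.linearIndependent_iff.mp hli c hsum
  apply hf0
  ext y
  simp [hfy, hzero]

lemma quadratic_lb {m : ℕ} (α x : Fin m → ℝ) :
    -(∑ i, (α i) ^ 2) / 4 ≤ ∑ i, α i * x i + ∑ i, (x i) ^ 2 := by
  have key : ∑ i, α i * x i + ∑ i, (x i) ^ 2 + (∑ i, (α i) ^ 2) / 4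
      = ∑ i, (x i + α i / 2) ^ 2 := by
    have h : ∀ i : Fin m, (x i + α i / 2) ^ 2 = (x i) ^ 2 + α i * x i + (α i) ^ 2 / 4 := by
      intro i; ring
    simp_rw [h, Finset.sum_add_distrib, ← Finset.sum_div]
    ring
  have hnn : 0 ≤ ∑ i, (x i + α i / 2) ^ 2 :=
    Finset.sum_nonneg fun i _ => sq_nonneg _
  linarith [key ▸ hnn]

/-- For linear functionals `ℓ₀, ℓ₁, …, ℓₘ` on `ℝ^d` and
`q(t) = ℓ₀(t) + ℓ₁(t)² + ⋯ + ℓₘ(t)²`: `q` is bounded below on `ℝ^d` iff `ℓ₀` lies in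
the span of `ℓ₁, …, ℓₘ`; and if `ℓ₁, …, ℓₘ` are linearly independent and
`ℓ₀ = α₁ℓ₁ + ⋯ + αₘℓₘ`, then `inf q = -(α₁² + ⋯ + αₘ²)/4`. -/
theorem quadratic_bddBelow_iff_span (d m : ℕ) (hd : 0 < d)
    (ℓ₀ : (Fin d → ℝ) →ₗ[ℝ] ℝ) (ℓ : Fin m → ((Fin d → ℝ) →ₗ[ℝ] ℝ))
    (q : (Fin d → ℝ) → ℝ)
    (hq : ∀ t : Fin d → ℝ, q t = ℓ₀ t + ∑ i, (ℓ i t) ^ 2) :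
    (BddBelow (Set.range q) ↔ ℓ₀ ∈ Submodule.span ℝ (Set.range ℓ)) ∧
      (∀ α : Fin m → ℝ, LinearIndependent ℝ ℓ → ℓ₀ = ∑ i, α i • ℓ i →
        IsGLB (Set.range q) (-(∑ i, (α i) ^ 2) / 4)) := by
  -- general lower bound when ℓ₀ = ∑ α i • ℓ i
  have main_lb : ∀ (α : Fin m → ℝ), ℓ₀ = (∑ i, α i • ℓ i) →
      ∀ t : Fin d → ℝ, -(∑ i, (α i) ^ 2) / 4 ≤ q t := by
    intro α hα t
    have hℓ₀ : ℓ₀ t = ∑ i, α i * ℓ i t := by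
      rw [hα]; simp
    rw [hq, hℓ₀]
    exact quadratic_lb α (fun i => ℓ i t)
  constructor
  · constructor
    · -- bounded below → ℓ₀ in span
      intro hb
      apply mem_span_of_iInf_ker_le_ker (L := ℓ)
      intro t ht
      simp only [Submodule.mem_iInf, LinearMap.mem_ker] at ht
      rw [LinearMap.mem_ker]
      by_contra h0
      obtain ⟨b, hbb⟩ := hb
      have key : ∀ s : ℝ, q (s • t) = s * ℓ₀ t := by
        intro s
        rw [hq]
        simp [map_smul, ht]
      have h1 : q (((b - 1) / (ℓ₀ t)) • t) = b - 1 := by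
        rw [key]
        field_simp
      have h2 : b ≤ b - 1 := h1 ▸ hbb ⟨_, rfl⟩
      linarith
    · -- ℓ₀ in span → bounded below
      intro hsp
      obtain ⟨c, hc⟩ := (Submodule.mem_span_range_iff_exists_fun ℝ).mp hsp
      refine ⟨-(∑ i, (c i) ^ 2) / 4, ?_⟩
      rintro y ⟨t, rfl⟩
      exact main_lb c hc.symm t
  · intro α hli hα
    constructor
    · rintro y ⟨t, rfl⟩
      exact main_lb α hα t
    · intro b hb
      obtain ⟨t, ht⟩ := pi_surjective_of_linearIndependent ℓ hli (fun i => -(α i) / 2)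
      have hti : ∀ i, ℓ i t = -(α i) / 2 := fun i => congrFun ht i
      have hqt : q t = -(∑ i, (α i) ^ 2) / 4 := by
        rw [hq]
        have hℓ₀ : ℓ₀ t = ∑ i, α i * ℓ i t := by rw [hα]; simp
        rw [hℓ₀]
        simp_rw [hti]
        have hterm : ∀ i : Fin m, α i * (-(α i) / 2) + (-(α i) / 2) ^ 2
            = -((α i) ^ 2 / 4) := fun i => by ring
        rw [← Finset.sum_add_distrib]
        simp_rw [hterm]
        rw [Finset.sum_neg_distrib, ← Finset.sum_div, neg_div]
      exact hqt ▸ hb ⟨t, rfl⟩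
end

section
/- Let p ∈ ℝ[t] be a univariate real polynomial. Then p(0) = 0 and p(τ) ≤ 0 for every τ ≤ 0 if and only if there exist polynomials σ₁, σ₂ ∈ ℝ[t], each a sum of squares of polynomials, such that p = t·σ₁ − t²·σ₂ (i.e., p ∈ t·(S − t·S), where S ⊂ ℝ[t] is the convex cone of sums of squares). -/
open scoped BigOperators

/-- A univariate real polynomial is a sum of squares. -/
def IsSOSpoly (σ : Polynomial ℝ) : Prop :=
  ∃ (n : ℕ) (g : Fin n → Polynomial ℝ), σ = ∑ j, (g j) ^ 2

/-!
Substituting `t ↦ -t`, one has to show that a polynomial `q ≥ 0` on `[0, ∞)` lies in `S + X S`.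
Since `S + X S` is closed under products, it suffices to split off from `q` a factor of positive
degree lying in `S + X S`: a pair of non-real roots gives a positive definite quadratic (a sum of
two squares), a root `r ≤ 0` gives `X - r = (-r) + X`, and a root `r > 0` is a local minimum of
`q`, hence a double root, giving `(X - r)²`. The cofactor stays nonnegative on `[0, ∞)` by
continuity. Finally `q(0) = 0` forces the `S`-part to vanish at `0`, and a sum of squares
vanishing at `0` is `X²` times a sum of squares.
-/

open Polynomial Filter Topology

theorem IsSumSq.map {R S F : Type*} [NonUnitalNonAssocSemiring R] [NonUnitalNonAssocSemiring S]
    [FunLike F R S] [NonUnitalRingHomClass F R S] (f : F) {s : R} (hs : IsSumSq s) :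
    IsSumSq (f s) := by
  induction hs with
  | zero => simp [IsSumSq.zero]
  | sq_add a _ ih => simpa using ih.sq_add (f a)

theorem isSOSpoly_iff_isSumSq {σ : ℝ[X]} : IsSOSpoly σ ↔ IsSumSq σ := by
  constructor
  · rintro ⟨n, g, rfl⟩
    exact IsSumSq.sum_sq _ _
  · intro h
    induction h with
    | zero => exact ⟨0, ![], by simp⟩
    | sq_add a _ ih =>
      obtain ⟨n, g, rfl⟩ := ih
      exact ⟨n + 1, Fin.cons a g, by simp [Fin.sum_univ_succ, sq]⟩

theorem IsSumSq.exists_sq_X_sub_C_mul {R : Type*} [CommRing R] [LinearOrder R]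
    [IsStrictOrderedRing R] {σ : R[X]} (hσ : IsSumSq σ) {r : R} (hr : σ.IsRoot r) :
    ∃ σ₂ : R[X], IsSumSq σ₂ ∧ σ = (X - C r) ^ 2 * σ₂ := by
  induction hσ with
  | zero => exact ⟨0, .zero, by simp⟩
  | @sq_add a s hs ih =>
    have ha : a.IsRoot r ∧ s.IsRoot r := by
      have := (add_eq_zero_iff_of_nonneg (mul_self_nonneg (a.eval r))
        (hs.map (evalRingHom r)).nonneg).mp (by simpa using hr)
      simpa using this
    obtain ⟨b, rfl⟩ := dvd_iff_isRoot.mpr ha.1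
    obtain ⟨s₂, hs₂, rfl⟩ := ih ha.2
    exact ⟨b * b + s₂, hs₂.sq_add b, by ring⟩

section

variable {R : Type*} [CommSemiring R]

/-- The quadratic module `S + x S` generated by `x`, where `S` is the cone of sums of squares;
it is closed under products since `x² S ⊆ S`. -/
def IsSumSqAddMulSumSq (x q : R) : Prop :=
  ∃ σ τ : R, IsSumSq σ ∧ IsSumSq τ ∧ q = σ + x * τ

namespace IsSumSqAddMulSumSq

variable {x q q' : R}

theorem of_isSumSq (h : IsSumSq q) : IsSumSqAddMulSumSq x q :=
  ⟨q, 0, h, .zero, by simp⟩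

theorem mul (h : IsSumSqAddMulSumSq x q) (h' : IsSumSqAddMulSumSq x q') :
    IsSumSqAddMulSumSq x (q * q') := by
  obtain ⟨σ, τ, hσ, hτ, rfl⟩ := h
  obtain ⟨σ', τ', hσ', hτ', rfl⟩ := h'
  refine ⟨σ * σ' + x * x * (τ * τ'), σ * τ' + τ * σ',
    (hσ.mul hσ').add ((IsSumSq.mul_self x).mul (hτ.mul hτ')),
    (hσ.mul hτ').add (hτ.mul hσ'), by ring⟩

theorem map {S F : Type*} [CommSemiring S] [FunLike F R S] [RingHomClass F R S] (f : F)
    (h : IsSumSqAddMulSumSq x q) : IsSumSqAddMulSumSq (f x) (f q) := by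
  obtain ⟨σ, τ, hσ, hτ, rfl⟩ := h
  exact ⟨f σ, f τ, hσ.map f, hτ.map f, by simp⟩

end IsSumSqAddMulSumSq

end

theorem IsSumSqAddMulSumSq.nonneg {R : Type*} [CommSemiring R] [LinearOrder R]
    [IsStrictOrderedRing R] [ExistsAddOfLE R] {x q : R} (h : IsSumSqAddMulSumSq x q)
    (hx : 0 ≤ x) : 0 ≤ q := by
  obtain ⟨σ, τ, hσ, hτ, rfl⟩ := h
  exact add_nonneg hσ.nonneg (mul_nonneg hx hτ.nonneg)

namespace Polynomial

theorem isSumSq_C {c : ℝ} (hc : 0 ≤ c) : IsSumSq (C c) := by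
  simpa [← C_mul, Real.mul_self_sqrt hc] using IsSumSq.mul_self (C √c)

theorem eventually_eval_ne_zero_nhdsNE {R : Type*} [CommRing R] [IsDomain R] [TopologicalSpace R]
    [T1Space R] {a : R[X]} (ha : a ≠ 0) (t : R) :
    ∀ᶠ s in 𝓝[≠] t, a.eval s ≠ 0 := by
  have hfin : {s | a.IsRoot s}.Finite := finite_setOfPred_isRoot ha
  have := mem_codiscrete.mp hfin.compl_mem_codiscrete t
  rw [compl_compl] at this
  exact disjoint_principal_right.mp this

theorem eval_nonneg_of_mul_eval_nonneg {a v : ℝ[X]} {c : ℝ} (ha0 : a ≠ 0)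
    (ha : ∀ t, c ≤ t → 0 ≤ a.eval t) (hav : ∀ t, c ≤ t → 0 ≤ (a * v).eval t) :
    ∀ t, c ≤ t → 0 ≤ v.eval t := by
  intro t ht
  have hv : ∀ᶠ s in 𝓝[>] t, 0 ≤ v.eval s := by
    filter_upwards [(eventually_eval_ne_zero_nhdsNE ha0 t).filter_mono (nhdsGT_le_nhdsNE t),
      self_mem_nhdsWithin] with s has hts
    have hcs : c ≤ s := ht.trans (le_of_lt hts)
    exact nonneg_of_mul_nonneg_right (by simpa using hav s hcs) ((ha s hcs).lt_of_ne' has)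
  exact ge_of_tendsto ((v.continuous.tendsto t).mono_left nhdsWithin_le_nhds) hv

theorem sq_X_sub_C_dvd_of_isRoot_of_eventually_nonneg {q : ℝ[X]} {r : ℝ} (hr : q.IsRoot r)
    (hq : ∀ᶠ t in 𝓝 r, 0 ≤ q.eval t) : (X - C r) ^ 2 ∣ q := by
  rcases eq_or_ne q 0 with rfl | hq0
  · exact dvd_zero _
  have hmin : IsLocalMin (fun t => q.eval t) r := by
    filter_upwards [hq] with t ht
    simpa [hr.eq_zero] using ht
  have hderiv : q.derivative.IsRoot r := by
    simpa [Polynomial.deriv] using hmin.deriv_eq_zero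
  exact (le_rootMultiplicity_iff hq0).mp ((one_lt_rootMultiplicity_iff_isRoot hq0).mpr ⟨hr, hderiv⟩)

theorem exists_dvd_isSumSqAddMulSumSq_X {q : ℝ[X]} (hdeg : 0 < q.natDegree)
    (hq : ∀ t, 0 ≤ t → 0 ≤ q.eval t) :
    ∃ a : ℝ[X], IsSumSqAddMulSumSq X a ∧ 0 < a.natDegree ∧ a ∣ q := by
  obtain ⟨z, hz⟩ := IsAlgClosed.exists_aeval_eq_zero ℂ q (natDegree_pos_iff_degree_pos.mp hdeg).ne'
  by_cases him : z.im = 0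
  · have hr : q.IsRoot z.re := by
      have hzr : z = algebraMap ℝ ℂ z.re := Complex.ext rfl (by simpa using him)
      rw [hzr, aeval_algebraMap_apply_eq_algebraMap_eval] at hz
      simpa using hz
    rcases le_or_gt z.re 0 with hr0 | hr0
    · refine ⟨X - C z.re, ⟨C (-z.re), 1, isSumSq_C (by linarith), .one, ?_⟩, by simp,
        dvd_iff_isRoot.mpr hr⟩
      simp only [map_neg, mul_one]
      ring
    · refine ⟨(X - C z.re) ^ 2, .of_isSumSq (IsSquare.sq _).isSumSq, by simp,
        sq_X_sub_C_dvd_of_isRoot_of_eventually_nonneg hr ?_⟩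
      filter_upwards [Ici_mem_nhds hr0] with t ht using hq t ht
  · have hQ : X ^ 2 - C (2 * z.re) * X + C (‖z‖ ^ 2) = (X - C z.re) ^ 2 + C z.im ^ 2 := by
      rw [Complex.sq_norm, Complex.normSq_apply]
      simp only [C_add, C_mul, map_ofNat]
      ring
    refine ⟨_, .of_isSumSq ?_, ?_, quadratic_dvd_of_aeval_eq_zero_im_ne_zero q hz him⟩
    · rw [hQ]
      exact (IsSquare.sq _).isSumSq.add (IsSquare.sq _).isSumSq
    · have : (X ^ 2 - C (2 * z.re) * X + C (‖z‖ ^ 2) : ℝ[X]).natDegree = 2 := by compute_degree!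
      omega

theorem isSumSqAddMulSumSq_X_of_eval_nonneg {q : ℝ[X]} (hq : ∀ t, 0 ≤ t → 0 ≤ q.eval t) :
    IsSumSqAddMulSumSq X q := by
  induction hn : q.natDegree using Nat.strong_induction_on generalizing q with
  | _ n ih =>
  rcases Nat.eq_zero_or_pos n with rfl | hpos
  · rw [eq_C_of_natDegree_eq_zero hn, coeff_zero_eq_eval_zero]
    exact .of_isSumSq (isSumSq_C (hq 0 le_rfl))
  obtain ⟨a, ha, hadeg, v, rfl⟩ := exists_dvd_isSumSqAddMulSumSq_X (hn ▸ hpos) hq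
  have ha0 : a ≠ 0 := ne_zero_of_natDegree_gt hadeg
  have hv0 : v ≠ 0 := by rintro rfl; simp at hn; omega
  have hanonneg : ∀ t, 0 ≤ t → 0 ≤ a.eval t := fun t ht => by
    simpa using (ha.map (evalRingHom t)).nonneg (by simpa using ht)
  refine ha.mul (ih v.natDegree ?_ (eval_nonneg_of_mul_eval_nonneg ha0 hanonneg hq) rfl)
  rw [← hn, natDegree_mul ha0 hv0]
  omega

end Polynomial

/-- For `p ∈ ℝ[t]`: `p(0) = 0` and `p ≤ 0` on `(-∞, 0]` iff `p = t σ₁ - t² σ₂` for sums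
of squares `σ₁, σ₂ ∈ ℝ[t]`, i.e. `p ∈ t (S - t S)`. -/
theorem nonpos_on_nonpos_iff (p : Polynomial ℝ) :
    (p.eval 0 = 0 ∧ ∀ τ : ℝ, τ ≤ 0 → p.eval τ ≤ 0) ↔
      ∃ σ₁ σ₂ : Polynomial ℝ, IsSOSpoly σ₁ ∧ IsSOSpoly σ₂ ∧
        p = Polynomial.X * σ₁ - Polynomial.X ^ 2 * σ₂ := by
  simp only [isSOSpoly_iff_isSumSq]
  constructor
  · rintro ⟨h0, hneg⟩
    have hq : ∀ t : ℝ, 0 ≤ t → 0 ≤ (-p.comp (-X)).eval t := fun t ht => by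
      simpa using hneg (-t) (by linarith)
    obtain ⟨σ, τ, hσ, hτ, he⟩ := isSumSqAddMulSumSq_X_of_eval_nonneg hq
    have hσ0 : σ.IsRoot 0 := by simpa [h0] using congr_arg (eval 0) he.symm
    obtain ⟨σ₂, hσ₂, rfl⟩ := hσ.exists_sq_X_sub_C_mul hσ0
    refine ⟨τ.comp (-X), σ₂.comp (-X), hτ.map (compRingHom (-X)), hσ₂.map (compRingHom (-X)), ?_⟩
    have hp : p = -(-p.comp (-X)).comp (-X) := by simp [comp_assoc]
    rw [hp, he]
    simp only [add_comp, mul_comp, pow_comp, X_comp, map_zero, sub_zero]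
    ring
  · rintro ⟨σ₁, σ₂, h₁, h₂, rfl⟩
    refine ⟨by simp, fun t ht => ?_⟩
    have e₁ := (h₁.map (evalRingHom t)).nonneg
    have e₂ := (h₂.map (evalRingHom t)).nonneg
    simp only [coe_evalRingHom] at e₁ e₂
    simp only [eval_sub, eval_mul, eval_pow, eval_X]
    nlinarith
end
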